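/- arXiv:1911.02539 — 7 statements merged into one kernel-verified Lean document; each statement's English description precedes it below -/
import Mathlib

section
/- Let n ≥ 1, λ ∈ (0,n), and let (α_k) be a sequence of positive reals with α_k → ∞. Let (μ_k) be a sequence of Borel probability measures on ℝ^n converging weakly to a Borel probability measure μ. Then liminf_{k→∞} E_{α_k,λ}(μ_k) ≥ ∬_{ℝ^n×ℝ^n} |x−y|^{−λ} dμ(x)dμ(y) (both sides valued in [0,∞]). -/
open MeasureTheory Filter ENNReal Metric Topology

noncomputable section

/-- `ℝ^n` with the Euclidean metric. -/
abbrev Euc (n : ℕ) := EuclideanSpace ℝ (Fin n)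

/-- The support of a Borel measure: the smallest closed set of full measure,
described as the set of points all of whose neighborhoods have positive measure. -/
def msupport {n : ℕ} (μ : Measure (Euc n)) : Set (Euc n) :=
  {x | ∀ U : Set (Euc n), IsOpen U → x ∈ U → 0 < μ U}

/-- The repulsive (Riesz) energy `∬ |x-y|^(-λ) dμ dμ`, valued in `[0,∞]`. -/
def rieszEnergy (n : ℕ) (lam : ℝ) (μ : Measure (Euc n)) : ℝ≥0∞ :=
  ∫⁻ x, ∫⁻ y, edist x y ^ (-lam) ∂μ ∂μ

/-- The attractive–repulsive energy `E_{α,λ}(μ) = ∬ (|x-y|^α + |x-y|^(-λ)) dμ dμ`. -/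
def energy (n : ℕ) (a lam : ℝ) (μ : Measure (Euc n)) : ℝ≥0∞ :=
  ∫⁻ x, ∫⁻ y, (edist x y ^ a + edist x y ^ (-lam)) ∂μ ∂μ

namespace Stmt0Aux

open NNReal Set BoundedContinuousFunction

/-! ### The truncated Riesz profile and its basic properties -/

/-- Truncated Riesz profile. -/
def phi (lam r d : ℝ) : ℝ := (max d r) ^ (-lam)

lemma phi_nonneg {r : ℝ} (hr : 0 < r) (lam d : ℝ) : 0 ≤ phi lam r d :=
  Real.rpow_nonneg (le_trans hr.le (le_max_right d r)) _

lemma phi_le {lam r : ℝ} (hlam : 0 < lam) (hr : 0 < r) (d : ℝ) :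
    phi lam r d ≤ r ^ (-lam) :=
  Real.rpow_le_rpow_of_nonpos hr (le_max_right d r) (neg_nonpos.2 hlam.le)

/-- Lipschitz constant for the truncated profile. -/
def Lc (lam r : ℝ) : ℝ≥0 := Real.toNNReal (lam * r ^ (-lam - 1))

lemma phi_lipschitz {lam r : ℝ} (hlam : 0 < lam) (hr : 0 < r) :
    LipschitzWith (Lc lam r) (phi lam r) := by
  have h1 : LipschitzOnWith (Lc lam r) (fun x : ℝ => x ^ (-lam)) (Set.Ici r) := by
    apply (convex_Ici r).lipschitzOnWith_of_nnnorm_hasDerivWithin_le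
      (f' := fun x => (-lam) * x ^ (-lam - 1))
    · intro x hx
      have hx0 : x ≠ 0 := (hr.trans_le hx).ne'
      exact (Real.hasDerivAt_rpow_const (Or.inl hx0)).hasDerivWithinAt
    · intro x hx
      rw [← NNReal.coe_le_coe, coe_nnnorm, Real.norm_eq_abs]
      have hx0 : (0:ℝ) < x := hr.trans_le hx
      have h2 : x ^ (-lam - 1) ≤ r ^ (-lam - 1) :=
        Real.rpow_le_rpow_of_nonpos hr hx (by linarith)
      have h3 : (0:ℝ) ≤ x ^ (-lam - 1) := Real.rpow_nonneg hx0.le _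
      rw [abs_mul, abs_neg, abs_of_pos hlam, abs_of_nonneg h3]
      calc lam * x ^ (-lam - 1) ≤ lam * r ^ (-lam - 1) :=
            mul_le_mul_of_nonneg_left h2 hlam.le
        _ ≤ (Lc lam r : ℝ) :=
            le_of_eq (Real.coe_toNNReal _ (by positivity)).symm
  apply LipschitzWith.of_dist_le_mul
  intro d d'
  have hmem : ∀ d : ℝ, max d r ∈ Set.Ici r := fun d => le_max_right d r
  have := h1.dist_le_mul (max d r) (hmem d) (max d' r) (hmem d')
  refine le_trans this (mul_le_mul_of_nonneg_left ?_ (Lc lam r).coe_nonneg)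
  rw [Real.dist_eq, Real.dist_eq]
  exact abs_max_sub_max_le_abs d d' r

lemma phi_anti {lam r r' : ℝ} (hlam : 0 < lam) (hr : 0 < r) (h : r ≤ r') (d : ℝ) :
    phi lam r' d ≤ phi lam r d :=
  Real.rpow_le_rpow_of_nonpos (lt_max_of_lt_right hr) (max_le_max le_rfl h)
    (neg_nonpos.2 hlam.le)

lemma ofReal_phi_le {lam r : ℝ} (hlam : 0 < lam) (hr : 0 < r) {d : ℝ} (hd : 0 ≤ d) :
    ENNReal.ofReal (phi lam r d) ≤ ENNReal.ofReal d ^ (-lam) := by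
  have hb : (0:ℝ) < max d r := lt_max_of_lt_right hr
  rw [phi, ← ENNReal.ofReal_rpow_of_pos hb, ENNReal.rpow_neg, ENNReal.rpow_neg]
  refine ENNReal.inv_le_inv.mpr (ENNReal.rpow_le_rpow ?_ hlam.le)
  exact ENNReal.ofReal_le_ofReal (le_max_left d r)

/-- The sequence of truncation radii. -/
def rr (m : ℕ) : ℝ := 1 / ((m:ℝ) + 1)

lemma rr_pos (m : ℕ) : 0 < rr m := by rw [rr]; positivity

lemma rr_anti : Antitone rr := by
  intro i j hij
  rw [rr, rr]
  apply one_div_le_one_div_of_le (by positivity)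
  have : (i:ℝ) ≤ (j:ℝ) := Nat.cast_le.mpr hij
  linarith

lemma phi_rr_mono {lam : ℝ} (hlam : 0 < lam) (d : ℝ) :
    Monotone fun m : ℕ => ENNReal.ofReal (phi lam (rr m) d) := fun i j hij =>
  ENNReal.ofReal_le_ofReal (phi_anti hlam (rr_pos j) (rr_anti hij) d)

lemma sup_ofReal_phi {lam : ℝ} (hlam : 0 < lam) {d : ℝ} (hd : 0 ≤ d) :
    ⨆ m : ℕ, ENNReal.ofReal (phi lam (rr m) d) = ENNReal.ofReal d ^ (-lam) := by
  apply le_antisymm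
  · exact iSup_le fun m => ofReal_phi_le hlam (rr_pos m) hd
  rcases eq_or_lt_of_le hd with h0 | hdpos
  · subst h0
    have hL : ∀ m : ℕ, phi lam (rr m) 0 = ((m:ℝ) + 1) ^ lam := by
      intro m
      have hm1 : (0:ℝ) < (m:ℝ) + 1 := by positivity
      have hm : (0:ℝ) < rr m := rr_pos m
      rw [phi, max_eq_right hm.le, rr, one_div, ← Real.rpow_neg_one ((m:ℝ) + 1),
        ← Real.rpow_mul hm1.le]
      norm_num
    have htop : Tendsto (fun m : ℕ => ENNReal.ofReal (phi lam (rr m) 0))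
        atTop (𝓝 ⊤) := by
      simp only [hL]
      apply ENNReal.tendsto_ofReal_atTop.comp
      exact (_root_.tendsto_rpow_atTop hlam).comp
        (tendsto_atTop_add_const_right atTop 1 tendsto_natCast_atTop_atTop)
    have := tendsto_nhds_unique (tendsto_atTop_iSup (phi_rr_mono hlam 0)) htop
    simp only [ENNReal.ofReal_zero, ENNReal.zero_rpow_of_neg (neg_neg_of_pos hlam)]
    exact le_of_eq this.symm
  · obtain ⟨m, hm⟩ := exists_nat_one_div_lt hdpos
    have heq : phi lam (rr m) d = d ^ (-lam) := by
      rw [phi, rr, max_eq_left hm.le]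
    calc ENNReal.ofReal d ^ (-lam) = ENNReal.ofReal (d ^ (-lam)) :=
          ENNReal.ofReal_rpow_of_pos hdpos
      _ = ENNReal.ofReal (phi lam (rr m) d) := by rw [heq]
      _ ≤ _ := le_iSup (fun m : ℕ => ENNReal.ofReal (phi lam (rr m) d)) m

/-! ### A quantitative integral estimate in terms of the Lévy-Prokhorov distance -/

variable {Ω : Type*} [MeasurableSpace Ω] [PseudoMetricSpace Ω] [OpensMeasurableSpace Ω]

lemma meas_le_aux {M : ℝ} (ν : Measure Ω) [IsProbabilityMeasure ν] (g : Ω → ℝ) :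
    IntegrableOn (fun t => (ν {a | t ≤ g a}).toReal) (Ioc (0:ℝ) M) := by
  apply Measure.integrableOn_of_bounded (M := 1) measure_Ioc_lt_top.ne
  · apply (Measurable.ennreal_toReal (Antitone.measurable ?_)).aestronglyMeasurable
    exact fun s t hst => measure_mono (fun a ha => hst.trans ha)
  · refine Eventually.of_forall fun t => ?_
    rw [Real.norm_eq_abs, abs_of_nonneg ENNReal.toReal_nonneg]
    simpa using ENNReal.toReal_mono (measure_ne_top ν univ) (measure_mono (subset_univ _))

lemma integral_le_add_of_lp (μ ν : Measure Ω) [IsProbabilityMeasure μ] [IsProbabilityMeasure ν]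
    {ε : ℝ} (hε : 0 < ε) (h : levyProkhorovEDist μ ν < ENNReal.ofReal ε)
    (f : Ω →ᵇ ℝ) {L : ℝ≥0} (hf : LipschitzWith L f) (f_nn : ∀ x, 0 ≤ f x) :
    ∫ x, f x ∂μ ≤ (∫ x, f x ∂ν) + ε * L + ε * ‖f‖ := by
  set g : Ω →ᵇ ℝ := f + BoundedContinuousFunction.const Ω (ε * L) with hg
  have hgx : ∀ x, g x = f x + ε * L := fun x => rfl
  have g_nn : ∀ x, 0 ≤ g x := fun x => by
    rw [hgx]; have := f_nn x; positivity
  have hfg : ‖f‖ ≤ ‖g‖ := by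
    apply (BoundedContinuousFunction.norm_le (norm_nonneg g)).mpr
    intro x
    rw [Real.norm_eq_abs, abs_of_nonneg (f_nn x)]
    calc f x ≤ g x := by rw [hgx]; exact le_add_of_nonneg_right (by positivity)
      _ ≤ |g x| := le_abs_self _
      _ ≤ ‖g‖ := by rw [← Real.norm_eq_abs]; exact g.norm_coe_le_norm x
  have hsub : ∀ t : ℝ, thickening ε {a | t ≤ f a} ⊆ {a | t ≤ g a} := by
    intro t x hx
    obtain ⟨z, hz, hdist⟩ := mem_thickening_iff.mp hx
    have h1 : dist (f x) (f z) ≤ L * dist x z := hf.dist_le_mul x z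
    have h2 : f z - f x ≤ |f x - f z| := by rw [abs_sub_comm]; exact le_abs_self _
    rw [Real.dist_eq] at h1
    have h3 : (L : ℝ) * dist x z ≤ L * ε :=
      mul_le_mul_of_nonneg_left hdist.le L.coe_nonneg
    have hz' : t ≤ f z := hz
    show t ≤ g x
    rw [hgx]
    nlinarith [dist_nonneg (x := x) (y := z)]
  have step1 := BoundedContinuousFunction.integral_le_of_levyProkhorovEDist_lt μ ν hε h f
    (Eventually.of_forall f_nn)
  have intble_thick : IntegrableOn
      (fun t => (ν (thickening ε {a | t ≤ f a})).toReal) (Ioc (0:ℝ) ‖f‖) := by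
    apply Measure.integrableOn_of_bounded (M := 1) measure_Ioc_lt_top.ne
    · apply (Measurable.ennreal_toReal (Antitone.measurable ?_)).aestronglyMeasurable
      exact fun s t hst =>
        measure_mono (thickening_subset_of_subset ε fun a ha => hst.trans ha)
    · refine Eventually.of_forall fun t => ?_
      rw [Real.norm_eq_abs, abs_of_nonneg ENNReal.toReal_nonneg]
      simpa using ENNReal.toReal_mono (measure_ne_top ν univ) (measure_mono (subset_univ _))
  have intble_g := meas_le_aux (M := ‖g‖) ν g
  have step2 : (∫ t in Ioc (0:ℝ) ‖f‖, (ν (thickening ε {a | t ≤ f a})).toReal)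
      ≤ ∫ t in Ioc (0:ℝ) ‖g‖, (ν {a | t ≤ g a}).toReal := by
    calc (∫ t in Ioc (0:ℝ) ‖f‖, (ν (thickening ε {a | t ≤ f a})).toReal)
        ≤ ∫ t in Ioc (0:ℝ) ‖f‖, (ν {a | t ≤ g a}).toReal := by
          apply setIntegral_mono_on intble_thick
            (intble_g.mono_set (Ioc_subset_Ioc_right hfg)) measurableSet_Ioc
          intro t _
          exact ENNReal.toReal_mono (measure_ne_top ν _) (measure_mono (hsub t))
      _ ≤ ∫ t in Ioc (0:ℝ) ‖g‖, (ν {a | t ≤ g a}).toReal := by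
          apply setIntegral_mono_set intble_g
            (Eventually.of_forall fun t => ENNReal.toReal_nonneg)
          exact HasSubset.Subset.eventuallyLE (Ioc_subset_Ioc_right hfg)
  have step3 : (∫ t in Ioc (0:ℝ) ‖g‖, (ν {a | t ≤ g a}).toReal) = ∫ x, g x ∂ν :=
    (BoundedContinuousFunction.integral_eq_integral_meas_le g ν
      (Eventually.of_forall g_nn)).symm
  have step4 : ∫ x, g x ∂ν = (∫ x, f x ∂ν) + ε * L := by
    have : ∫ x, g x ∂ν = ∫ x, (f x + ε * L) ∂ν := by
      apply integral_congr_ae (Eventually.of_forall fun x => hgx x)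
    rw [this, integral_add (f.integrable ν) (integrable_const _), integral_const]
    simp
  calc ∫ x, f x ∂μ ≤ (∫ t in Ioc (0:ℝ) ‖f‖, (ν (thickening ε {a | t ≤ f a})).toReal)
        + ε * ‖f‖ := step1
    _ ≤ (∫ x, g x ∂ν) + ε * ‖f‖ := by rw [← step3]; linarith
    _ = (∫ x, f x ∂ν) + ε * L + ε * ‖f‖ := by rw [step4]

lemma abs_integral_sub_le_of_lp (μ ν : Measure Ω) [IsProbabilityMeasure μ]
    [IsProbabilityMeasure ν] {ε : ℝ} (hε : 0 < ε)
    (h : levyProkhorovEDist μ ν < ENNReal.ofReal ε)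
    (f : Ω →ᵇ ℝ) {L : ℝ≥0} (hf : LipschitzWith L f) (f_nn : ∀ x, 0 ≤ f x) :
    |(∫ x, f x ∂μ) - ∫ x, f x ∂ν| ≤ ε * (L + ‖f‖) := by
  have h' : levyProkhorovEDist ν μ < ENNReal.ofReal ε := by
    rwa [levyProkhorovEDist_comm]
  have h1 := integral_le_add_of_lp μ ν hε h f hf f_nn
  have h2 := integral_le_add_of_lp ν μ hε h' f hf f_nn
  rw [abs_sub_le_iff]
  constructor <;> nlinarith

/-! ### The truncated kernel and its inner integrals -/

/-- The truncated kernel, as a bounded continuous function of the second variable. -/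
def kerB (lam r : ℝ) (hlam : 0 < lam) (hr : 0 < r) (x : Ω) : Ω →ᵇ ℝ :=
  BoundedContinuousFunction.ofNormedAddCommGroup (fun y => phi lam r (dist x y))
    ((phi_lipschitz hlam hr).continuous.comp (continuous_const.dist continuous_id))
    (r ^ (-lam))
    (fun y => by
      rw [Real.norm_eq_abs, abs_of_nonneg (phi_nonneg hr _ _)]
      exact phi_le hlam hr _)

@[simp] lemma kerB_apply (lam r : ℝ) (hlam : 0 < lam) (hr : 0 < r) (x y : Ω) :
    kerB lam r hlam hr x y = phi lam r (dist x y) := rfl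

/-- Inner integral of the truncated kernel. -/
def Gfun (lam r : ℝ) (ν : Measure Ω) (x : Ω) : ℝ := ∫ y, phi lam r (dist x y) ∂ν

lemma Gfun_nonneg {lam r : ℝ} (hr : 0 < r) (ν : Measure Ω) (x : Ω) :
    0 ≤ Gfun lam r ν x :=
  integral_nonneg fun y => phi_nonneg hr _ _

lemma Gfun_le {lam r : ℝ} (hlam : 0 < lam) (hr : 0 < r) (ν : Measure Ω)
    [IsProbabilityMeasure ν] (x : Ω) : Gfun lam r ν x ≤ r ^ (-lam) := by
  have h := integral_mono ((kerB lam r hlam hr x).integrable ν)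
    (integrable_const (r ^ (-lam))) (fun y => phi_le hlam hr (dist x y))
  simpa [Gfun] using h

lemma Gfun_lipschitz {lam r : ℝ} (hlam : 0 < lam) (hr : 0 < r) (ν : Measure Ω)
    [IsProbabilityMeasure ν] : LipschitzWith (Lc lam r) (Gfun lam r ν) := by
  have hint : ∀ z : Ω, Integrable (fun y => phi lam r (dist z y)) ν := fun z =>
    (kerB lam r hlam hr z).integrable ν
  apply LipschitzWith.of_dist_le_mul
  intro x x'
  rw [Real.dist_eq, Gfun, Gfun, ← integral_sub (hint x) (hint x')]
  calc |∫ y, (phi lam r (dist x y) - phi lam r (dist x' y)) ∂ν|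
      ≤ ∫ y, |phi lam r (dist x y) - phi lam r (dist x' y)| ∂ν :=
        by simpa [Real.norm_eq_abs] using
          norm_integral_le_integral_norm (fun y => phi lam r (dist x y) - phi lam r (dist x' y)) (μ := ν)
    _ ≤ ∫ _y, (Lc lam r : ℝ) * dist x x' ∂ν := by
        apply integral_mono _ (integrable_const _)
        · intro y
          have h1 := (phi_lipschitz hlam hr).dist_le_mul (dist x y) (dist x' y)
          rw [Real.dist_eq, Real.dist_eq] at h1
          exact h1.trans (mul_le_mul_of_nonneg_left (abs_dist_sub_le x x' y)
            (Lc lam r).coe_nonneg)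
        · exact ((hint x).sub (hint x')).abs
    _ = (Lc lam r : ℝ) * dist x x' := by simp

/-- Inner integral of the truncated kernel, as a bounded continuous function. -/
def GB (lam r : ℝ) (hlam : 0 < lam) (hr : 0 < r) (ν : Measure Ω) [IsProbabilityMeasure ν] :
    Ω →ᵇ ℝ :=
  BoundedContinuousFunction.ofNormedAddCommGroup (Gfun lam r ν)
    (Gfun_lipschitz hlam hr ν).continuous (r ^ (-lam))
    (fun x => by
      rw [Real.norm_eq_abs, abs_of_nonneg (Gfun_nonneg hr ν x)]
      exact Gfun_le hlam hr ν x)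

lemma GB_norm_le (lam r : ℝ) (hlam : 0 < lam) (hr : 0 < r) (ν : Measure Ω)
    [IsProbabilityMeasure ν] : ‖GB lam r hlam hr ν‖ ≤ r ^ (-lam) :=
  BoundedContinuousFunction.norm_ofNormedAddCommGroup_le _ (by positivity) _

/-! ### Convergence of the double integrals of the truncated kernels -/

lemma tendsto_doubleIntegral {n : ℕ} {lam r : ℝ} (hlam : 0 < lam) (hr : 0 < r)
    (μs : ℕ → Measure (Euc n)) (hμs : ∀ k, IsProbabilityMeasure (μs k))
    (μ : Measure (Euc n)) (hμ : IsProbabilityMeasure μ)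
    (hconv : ∀ φ : BoundedContinuousFunction (Euc n) ℝ,
      Tendsto (fun k => ∫ x, φ x ∂(μs k)) atTop (𝓝 (∫ x, φ x ∂μ))) :
    Tendsto (fun k => ∫ x, Gfun lam r (μs k) x ∂(μs k)) atTop
      (𝓝 (∫ x, Gfun lam r μ x ∂μ)) := by
  haveI := fun k => hμs k
  -- probability measure bundles
  let P : ℕ → ProbabilityMeasure (Euc n) := fun k => ⟨μs k, hμs k⟩
  let Q : ProbabilityMeasure (Euc n) := ⟨μ, hμ⟩
  have hP : Tendsto P atTop (𝓝 Q) :=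
    ProbabilityMeasure.tendsto_iff_forall_integral_tendsto.mpr hconv
  -- Lévy-Prokhorov distances tend to zero
  set D : ℕ → ℝ := fun k => levyProkhorovDist (μs k) μ with hD_def
  have hD0 : ∀ k, 0 ≤ D k := fun k => ENNReal.toReal_nonneg
  have hD : Tendsto D atTop (𝓝 0) := by
    have hcont := LevyProkhorov.continuous_ofMeasure_probabilityMeasure (Ω := Euc n)
    have h2 : Tendsto (fun k => LevyProkhorov.ofMeasure (P k))
        atTop (𝓝 (LevyProkhorov.ofMeasure Q)) :=
      (hcont.tendsto Q).comp hP
    have := tendsto_iff_dist_tendsto_zero.mp h2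
    exact this
  have hED : ∀ k, levyProkhorovEDist (μs k) μ ≠ ⊤ := fun k =>
    levyProkhorovEDist_ne_top _ _
  -- constant
  set C : ℝ := (Lc lam r : ℝ) + r ^ (-lam) with hC_def
  have hC0 : 0 ≤ C := by positivity
  -- first term bound
  have bound1 : ∀ k, |(∫ x, Gfun lam r (μs k) x ∂(μs k)) - ∫ x, Gfun lam r (μs k) x ∂μ|
      ≤ D k * C := by
    intro k
    apply _root_.le_of_forall_pos_le_add
    intro η hη
    have hδ : 0 < η / (C + 1) := by positivity
    have hεpos : 0 < D k + η / (C + 1) := by have := hD0 k; linarith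
    have hlt : levyProkhorovEDist (μs k) μ < ENNReal.ofReal (D k + η / (C + 1)) := by
      rw [ENNReal.lt_ofReal_iff_toReal_lt (hED k)]
      have : (levyProkhorovEDist (μs k) μ).toReal = D k := rfl
      rw [this]; linarith
    have key := abs_integral_sub_le_of_lp (μs k) μ hεpos hlt
      (GB lam r hlam hr (μs k)) (Gfun_lipschitz hlam hr (μs k)) (Gfun_nonneg hr (μs k))
    have hnorm := GB_norm_le lam r hlam hr (μs k)
    have h2 : (D k + η / (C + 1)) * ((Lc lam r : ℝ) + ‖GB lam r hlam hr (μs k)‖)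
        ≤ (D k + η / (C + 1)) * C := by
      apply mul_le_mul_of_nonneg_left _ hεpos.le
      rw [hC_def]; linarith
    have h3 : (D k + η / (C + 1)) * C ≤ D k * C + η := by
      have : η / (C + 1) * C ≤ η := by
        rw [div_mul_eq_mul_div, div_le_iff₀ (by linarith)]
        nlinarith
      nlinarith [hD0 k]
    calc |(∫ x, Gfun lam r (μs k) x ∂(μs k)) - ∫ x, Gfun lam r (μs k) x ∂μ|
        = |(∫ x, GB lam r hlam hr (μs k) x ∂(μs k)) - ∫ x, GB lam r hlam hr (μs k) x ∂μ| := rfl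
      _ ≤ (D k + η / (C + 1)) * ((Lc lam r : ℝ) + ‖GB lam r hlam hr (μs k)‖) := key
      _ ≤ D k * C + η := h2.trans h3
  -- second term: dominated convergence
  have tend2 : Tendsto (fun k => ∫ x, Gfun lam r (μs k) x ∂μ) atTop
      (𝓝 (∫ x, Gfun lam r μ x ∂μ)) := by
    apply tendsto_integral_of_dominated_convergence (fun _ => r ^ (-lam))
    · exact fun k => (Gfun_lipschitz hlam hr (μs k)).continuous.aestronglyMeasurable
    · exact integrable_const _
    · intro k
      refine Eventually.of_forall fun x => ?_
      rw [Real.norm_eq_abs, abs_of_nonneg (Gfun_nonneg hr (μs k) x)]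
      exact Gfun_le hlam hr (μs k) x
    · refine Eventually.of_forall fun x => ?_
      exact hconv (kerB lam r hlam hr x)
  -- assemble
  rw [tendsto_iff_dist_tendsto_zero]
  apply squeeze_zero (fun k => dist_nonneg)
    (g := fun k => D k * C + dist (∫ x, Gfun lam r (μs k) x ∂μ) (∫ x, Gfun lam r μ x ∂μ))
  · intro k
    calc dist (∫ x, Gfun lam r (μs k) x ∂(μs k)) (∫ x, Gfun lam r μ x ∂μ)
        ≤ dist (∫ x, Gfun lam r (μs k) x ∂(μs k)) (∫ x, Gfun lam r (μs k) x ∂μ)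
          + dist (∫ x, Gfun lam r (μs k) x ∂μ) (∫ x, Gfun lam r μ x ∂μ) := dist_triangle _ _ _
      _ ≤ D k * C + dist (∫ x, Gfun lam r (μs k) x ∂μ) (∫ x, Gfun lam r μ x ∂μ) := by
          apply add_le_add _ le_rfl
          rw [Real.dist_eq]
          exact bound1 k
  · have h4 : Tendsto (fun k => dist (∫ x, Gfun lam r (μs k) x ∂μ) (∫ x, Gfun lam r μ x ∂μ))
        atTop (𝓝 0) := tendsto_iff_dist_tendsto_zero.mp tend2
    have hDC : Tendsto (fun k => D k * C) atTop (𝓝 0) := by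
      simpa using hD.mul_const C
    simpa using hDC.add h4

end Stmt0Aux

open Stmt0Aux

/-- liminf lower bound for the Gamma-limit: if `α_k → ∞` and
`μ_k ⇀ μ` weakly, then `liminf E_{α_k,λ}(μ_k) ≥ ∬ |x-y|^(-λ) dμ dμ`. -/
theorem stmt0 (n : ℕ) (hn : 1 ≤ n) (lam : ℝ) (hlam0 : 0 < lam) (hlamn : lam < n)
    (a : ℕ → ℝ) (ha : ∀ k, 0 < a k) (hatop : Tendsto a atTop atTop)
    (μs : ℕ → Measure (Euc n)) (hμs : ∀ k, IsProbabilityMeasure (μs k))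
    (μ : Measure (Euc n)) (hμ : IsProbabilityMeasure μ)
    (hconv : ∀ φ : BoundedContinuousFunction (Euc n) ℝ,
      Tendsto (fun k => ∫ x, φ x ∂(μs k)) atTop (𝓝 (∫ x, φ x ∂μ))) :
    rieszEnergy n lam μ ≤ atTop.liminf (fun k => energy n (a k) lam (μs k)) := by
  haveI := hμ
  haveI := fun k => hμs k
  -- the real double integrals of the truncated kernels
  set J : Measure (Euc n) → ℕ → ℝ := fun ν m => ∫ x, Gfun lam (rr m) ν x ∂ν with hJ
  -- inner and outer lintegral identities
  have inner_eq : ∀ (ν : Measure (Euc n)), IsProbabilityMeasure ν → ∀ (m : ℕ) (x : Euc n),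
      ∫⁻ y, ENNReal.ofReal (phi lam (rr m) (dist x y)) ∂ν
        = ENNReal.ofReal (Gfun lam (rr m) ν x) := by
    intro ν hν m x
    haveI := hν
    have hint : Integrable (fun y => phi lam (rr m) (dist x y)) ν :=
      (kerB lam (rr m) hlam0 (rr_pos m) x).integrable ν
    exact (ofReal_integral_eq_lintegral_ofReal hint
      (Eventually.of_forall fun y => phi_nonneg (rr_pos m) _ _)).symm
  have outer_eq : ∀ (ν : Measure (Euc n)), IsProbabilityMeasure ν → ∀ m : ℕ,
      ∫⁻ x, ENNReal.ofReal (Gfun lam (rr m) ν x) ∂ν = ENNReal.ofReal (J ν m) := by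
    intro ν hν m
    haveI := hν
    have hint : Integrable (fun x => Gfun lam (rr m) ν x) ν :=
      (GB lam (rr m) hlam0 (rr_pos m) ν).integrable ν
    exact (ofReal_integral_eq_lintegral_ofReal hint
      (Eventually.of_forall fun x => Gfun_nonneg (rr_pos m) ν x)).symm
  have meas_phi : ∀ (m : ℕ) (x : Euc n),
      Measurable fun y => ENNReal.ofReal (phi lam (rr m) (dist x y)) := fun m x =>
    (ENNReal.continuous_ofReal.comp
      ((phi_lipschitz hlam0 (rr_pos m)).continuous.comp
        (continuous_const.dist continuous_id))).measurable
  -- the left-hand side is the supremum of the truncated energies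
  have lhs_eq : rieszEnergy n lam μ = ⨆ m : ℕ, ENNReal.ofReal (J μ m) := by
    rw [rieszEnergy]
    have h1 : ∀ x : Euc n, ∫⁻ y, edist x y ^ (-lam) ∂μ
        = ⨆ m : ℕ, ENNReal.ofReal (Gfun lam (rr m) μ x) := by
      intro x
      calc ∫⁻ y, edist x y ^ (-lam) ∂μ
          = ∫⁻ y, ⨆ m : ℕ, ENNReal.ofReal (phi lam (rr m) (dist x y)) ∂μ := by
            apply lintegral_congr
            intro y
            rw [edist_dist, ← sup_ofReal_phi hlam0 dist_nonneg]
        _ = ⨆ m : ℕ, ∫⁻ y, ENNReal.ofReal (phi lam (rr m) (dist x y)) ∂μ := by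
            apply lintegral_iSup (fun m => meas_phi m x)
            intro i j hij y
            exact phi_rr_mono hlam0 _ hij
        _ = ⨆ m : ℕ, ENNReal.ofReal (Gfun lam (rr m) μ x) := by
            congr 1
            funext m
            exact inner_eq μ hμ m x
    calc ∫⁻ x, ∫⁻ y, edist x y ^ (-lam) ∂μ ∂μ
        = ∫⁻ x, ⨆ m : ℕ, ENNReal.ofReal (Gfun lam (rr m) μ x) ∂μ := lintegral_congr h1
      _ = ⨆ m : ℕ, ∫⁻ x, ENNReal.ofReal (Gfun lam (rr m) μ x) ∂μ := by
          apply lintegral_iSup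
          · exact fun m => (ENNReal.continuous_ofReal.comp
              (Gfun_lipschitz hlam0 (rr_pos m) μ).continuous).measurable
          · intro i j hij x
            apply ENNReal.ofReal_le_ofReal
            apply integral_mono ((kerB lam (rr i) hlam0 (rr_pos i) x).integrable μ)
              ((kerB lam (rr j) hlam0 (rr_pos j) x).integrable μ)
            intro y
            exact phi_anti hlam0 (rr_pos j) (rr_anti hij) _
      _ = ⨆ m : ℕ, ENNReal.ofReal (J μ m) := by
          congr 1
          funext m
          exact outer_eq μ hμ m
  rw [lhs_eq]
  apply iSup_le
  intro m
  -- each truncated energy of `μs k` is below the full energy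
  have hk : ∀ k, ENNReal.ofReal (J (μs k) m) ≤ energy n (a k) lam (μs k) := by
    intro k
    rw [energy]
    calc ENNReal.ofReal (J (μs k) m)
        = ∫⁻ x, ENNReal.ofReal (Gfun lam (rr m) (μs k) x) ∂(μs k) :=
          (outer_eq (μs k) (hμs k) m).symm
      _ = ∫⁻ x, ∫⁻ y, ENNReal.ofReal (phi lam (rr m) (dist x y)) ∂(μs k) ∂(μs k) :=
          lintegral_congr fun x => (inner_eq (μs k) (hμs k) m x).symm
      _ ≤ ∫⁻ x, ∫⁻ y, (edist x y ^ (a k) + edist x y ^ (-lam)) ∂(μs k) ∂(μs k) := by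
          apply lintegral_mono
          intro x
          apply lintegral_mono
          intro y
          calc ENNReal.ofReal (phi lam (rr m) (dist x y)) ≤ edist x y ^ (-lam) := by
                rw [edist_dist]
                exact ofReal_phi_le hlam0 (rr_pos m) dist_nonneg
            _ ≤ _ := self_le_add_left _ _
  -- convergence of the truncated energies
  have htends : Tendsto (fun k => ENNReal.ofReal (J (μs k) m)) atTop
      (𝓝 (ENNReal.ofReal (J μ m))) :=
    (ENNReal.continuous_ofReal.tendsto _).comp
      (tendsto_doubleIntegral hlam0 (rr_pos m) μs hμs μ hμ hconv)
  calc ENNReal.ofReal (J μ m)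
      = atTop.liminf (fun k => ENNReal.ofReal (J (μs k) m)) := htends.liminf_eq.symm
    _ ≤ atTop.liminf (fun k => energy n (a k) lam (μs k)) :=
        liminf_le_liminf (Eventually.of_forall hk)
end
end

section
/- Let n ≥ 1, λ ∈ (0,n), and let μ be a Borel probability measure on ℝ^n whose support has diameter strictly greater than 1. Then for every sequence of positive reals α_k → ∞ and every sequence of Borel probability measures μ_k converging weakly to μ, one has E_{α_k,λ}(μ_k) → ∞. -/
/-!
Pick support points `x`, `y` of `μ` with `1 < t < |x - y|`, and open neighbourhoods `U ∋ x`,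
`V ∋ y` with `|u - v| > t` on `U × V`. Both have positive `μ`-mass, so by the portmanteau theorem
their `μ_k`-masses are eventually bounded below by positive constants `c_U`, `c_V`. Restricting the
energy integral to `U × V` gives `E_{α_k,λ}(μ_k) ≥ t ^ α_k * c_V * c_U`, which tends to `∞`
since `t > 1`.
-/

open MeasureTheory Filter ENNReal Metric Topology

noncomputable section

theorem ENNReal.tendsto_rpow_atTop_of_one_lt {t : ℝ≥0∞} (ht : 1 < t) (ht' : t ≠ ⊤) :
    Tendsto (t ^ · : ℝ → ℝ≥0∞) atTop (𝓝 ⊤) := by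
  have h0 : 0 < t.toReal := ENNReal.toReal_pos (zero_lt_one.trans ht).ne' ht'
  have h1 : 1 < t.toReal := by simpa using (ENNReal.toReal_lt_toReal one_ne_top ht').2 ht
  refine (ENNReal.tendsto_ofReal_atTop.comp (tendsto_rpow_atTop_of_base_gt_one _ h1)).congr
    fun x => ?_
  rw [Function.comp_apply, ← ENNReal.ofReal_rpow_of_pos h0, ENNReal.ofReal_toReal ht']

theorem Metric.exists_lt_edist_of_lt_ediam {X : Type*} [PseudoEMetricSpace X] {s : Set X}
    {t : ℝ≥0∞} (h : t < ediam s) : ∃ x ∈ s, ∃ y ∈ s, t < edist x y := by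
  by_contra! H
  exact h.not_ge (ediam_le H)

theorem exists_isOpen_forall_lt_edist {X : Type*} [PseudoEMetricSpace X] {x y : X}
    {t : ℝ≥0∞} (h : t < edist x y) :
    ∃ U V : Set X, IsOpen U ∧ IsOpen V ∧ x ∈ U ∧ y ∈ V ∧ ∀ u ∈ U, ∀ v ∈ V, t < edist u v := by
  obtain ⟨U, V, hU, hV, hxU, hyV, hUV⟩ :=
    isOpen_prod_iff.mp (isOpen_lt continuous_const continuous_edist) x y h
  exact ⟨U, V, hU, hV, hxU, hyV, fun u hu v hv => @hUV (u, v) ⟨hu, hv⟩⟩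

theorem mul_measure_mul_le_lintegral_lintegral {X : Type*} [MeasurableSpace X]
    (μ ν : Measure X) {A B : Set X} (hA : MeasurableSet A) (hB : MeasurableSet B)
    {f : X → X → ℝ≥0∞} {c : ℝ≥0∞} (hf : ∀ u ∈ A, ∀ v ∈ B, c ≤ f u v) :
    c * ν B * μ A ≤ ∫⁻ u, ∫⁻ v, f u v ∂ν ∂μ := by
  have inner : ∀ u ∈ A, c * ν B ≤ ∫⁻ v, f u v ∂ν := fun u hu =>
    calc c * ν B = ∫⁻ _ in B, c ∂ν := (setLIntegral_const B c).symm
      _ ≤ ∫⁻ v in B, f u v ∂ν := setLIntegral_mono' hB (hf u hu)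
      _ ≤ ∫⁻ v, f u v ∂ν := setLIntegral_le_lintegral B _
  calc c * ν B * μ A = ∫⁻ _ in A, c * ν B ∂μ := (setLIntegral_const A _).symm
    _ ≤ ∫⁻ u in A, ∫⁻ v, f u v ∂ν ∂μ := setLIntegral_mono' hA inner
    _ ≤ ∫⁻ u, ∫⁻ v, f u v ∂ν ∂μ := setLIntegral_le_lintegral A _

theorem ProbabilityMeasure.eventually_lt_measure_of_tendsto {Ω ι : Type*} {L : Filter ι}
    [MeasurableSpace Ω] [TopologicalSpace Ω] [OpensMeasurableSpace Ω] [HasOuterApproxClosed Ω]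
    {μ : ProbabilityMeasure Ω} {μs : ι → ProbabilityMeasure Ω} (hμs : Tendsto μs L (𝓝 μ))
    {G : Set Ω} (hG : IsOpen G) {c : ℝ≥0∞} (hc : c < (μ : Measure Ω) G) :
    ∀ᶠ i in L, c < (μs i : Measure Ω) G :=
  eventually_lt_of_lt_liminf <|
    hc.trans_le (ProbabilityMeasure.le_liminf_measure_open_of_tendsto hμs hG)

theorem rpow_mul_measure_mul_le_energy {n : ℕ} (ν : Measure (Euc n)) {a : ℝ} (ha : 0 ≤ a)
    (lam : ℝ) {U V : Set (Euc n)} (hU : MeasurableSet U) (hV : MeasurableSet V) {t : ℝ≥0∞}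
    (hUV : ∀ u ∈ U, ∀ v ∈ V, t ≤ edist u v) :
    t ^ a * ν V * ν U ≤ energy n a lam ν :=
  mul_measure_mul_le_lintegral_lintegral ν ν hU hV fun u hu v hv =>
    (ENNReal.rpow_le_rpow (hUV u hu v hv) ha).trans le_self_add

theorem stmt1_general (n : ℕ) (lam : ℝ)
    (μ : Measure (Euc n)) (hμ : IsProbabilityMeasure μ)
    (hdiam : 1 < EMetric.diam (msupport μ))
    (a : ℕ → ℝ) (hatop : Tendsto a atTop atTop)
    (μs : ℕ → Measure (Euc n)) (hμs : ∀ k, IsProbabilityMeasure (μs k))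
    (hconv : ∀ φ : BoundedContinuousFunction (Euc n) ℝ,
      Tendsto (fun k => ∫ x, φ x ∂(μs k)) atTop (𝓝 (∫ x, φ x ∂μ))) :
    Tendsto (fun k => energy n (a k) lam (μs k)) atTop (𝓝 ⊤) := by
  obtain ⟨x, hx, y, hy, hxy⟩ := exists_lt_edist_of_lt_ediam hdiam
  obtain ⟨t, ht1, htxy⟩ := exists_between hxy
  obtain ⟨U, V, hU, hV, hxU, hyV, hUV⟩ := exists_isOpen_forall_lt_edist htxy
  obtain ⟨cU, hcU0, hcU⟩ := exists_between (hx U hU hxU)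
  obtain ⟨cV, hcV0, hcV⟩ := exists_between (hy V hV hyV)
  let P : ℕ → ProbabilityMeasure (Euc n) := fun k => ⟨μs k, hμs k⟩
  have hweak : Tendsto P atTop (𝓝 ⟨μ, hμ⟩) :=
    ProbabilityMeasure.tendsto_iff_forall_integral_tendsto.mpr hconv
  have hlower : Tendsto (fun k => t ^ a k * cV * cU) atTop (𝓝 ⊤) := by
    have hpow := (tendsto_rpow_atTop_of_one_lt ht1 (htxy.trans (edist_lt_top x y)).ne).comp hatop
    have hc : cV * cU ≠ 0 := mul_ne_zero hcV0.ne' hcU0.ne'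
    simpa only [Function.comp_apply, mul_assoc, ENNReal.top_mul hc] using
      ENNReal.Tendsto.mul_const hpow (b := cV * cU) (.inl top_ne_zero)
  refine tendsto_nhds_top_mono hlower ?_
  filter_upwards [ProbabilityMeasure.eventually_lt_measure_of_tendsto hweak hU hcU,
    ProbabilityMeasure.eventually_lt_measure_of_tendsto hweak hV hcV,
    hatop.eventually_ge_atTop 0] with k hkU hkV hak
  calc t ^ a k * cV * cU ≤ t ^ a k * μs k V * μs k U := by
        gcongr
        exacts [hkV.le, hkU.le]
    _ ≤ energy n (a k) lam (μs k) :=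
      rpow_mul_measure_mul_le_energy _ hak lam hU.measurableSet hV.measurableSet
        fun u hu v hv => (hUV u hu v hv).le

/-- if the support of `μ` has diameter `> 1`, then for any `α_k → ∞`
and any `μ_k ⇀ μ` weakly, `E_{α_k,λ}(μ_k) → ∞`. -/
theorem stmt1 (n : ℕ) (hn : 1 ≤ n) (lam : ℝ) (hlam0 : 0 < lam) (hlamn : lam < n)
    (μ : Measure (Euc n)) (hμ : IsProbabilityMeasure μ)
    (hdiam : 1 < EMetric.diam (msupport μ))
    (a : ℕ → ℝ) (ha : ∀ k, 0 < a k) (hatop : Tendsto a atTop atTop)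
    (μs : ℕ → Measure (Euc n)) (hμs : ∀ k, IsProbabilityMeasure (μs k))
    (hconv : ∀ φ : BoundedContinuousFunction (Euc n) ℝ,
      Tendsto (fun k => ∫ x, φ x ∂(μs k)) atTop (𝓝 (∫ x, φ x ∂μ))) :
    Tendsto (fun k => energy n (a k) lam (μs k)) atTop (𝓝 ⊤) :=
  stmt1_general n lam μ hμ hdiam a hatop μs hμs hconv
end
end

section
/- Let n ≥ 1, λ ∈ (0,n), let μ be a Borel probability measure on ℝ^n whose support has diameter at most 1, and let (α_k) be a sequence of positive reals with α_k → ∞. Set β_k = e^{1/√(α_k)} and define μ_k(A) := μ(β_k · A) for Borel sets A ⊂ ℝ^n (i.e. μ_k is the pushforward of μ under x ↦ x/β_k). Then μ_k converges weakly to μ, and for each k, E_{α_k,λ}(μ_k) ≤ e^{−√(α_k)} + e^{λ/√(α_k)} · ∬ |x−y|^{−λ} dμ(x)dμ(y). In particular limsup_{k→∞} E_{α_k,λ}(μ_k) ≤ ∬ |x−y|^{−λ} dμ(x)dμ(y). -/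
open MeasureTheory Filter ENNReal Metric Topology

noncomputable section

/-- The complement of `msupport μ` is null. -/
lemma msupport_compl_null {n : ℕ} (μ : Measure (Euc n)) : μ (msupport μ)ᶜ = 0 := by
  have hcompl : (msupport μ)ᶜ = ⋃₀ {U : Set (Euc n) | IsOpen U ∧ μ U = 0} := by
    ext x
    simp only [Set.mem_compl_iff, msupport, Set.mem_setOf_eq, Set.mem_sUnion, not_forall]
    constructor
    · rintro ⟨U, hU, hxU, hpos⟩
      exact ⟨U, ⟨hU, le_zero_iff.1 (not_lt.1 hpos)⟩, hxU⟩
    · rintro ⟨U, ⟨hU, hU0⟩, hxU⟩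
      exact ⟨U, hU, hxU, by simp [hU0]⟩
  obtain ⟨T, hTc, hTsub, hTeq⟩ :=
    TopologicalSpace.isOpen_sUnion_countable {U : Set (Euc n) | IsOpen U ∧ μ U = 0}
      (fun s hs => hs.1)
  rw [hcompl, ← hTeq]
  exact (measure_sUnion_null_iff hTc).2 fun s hs => (hTsub hs).2

/-- the recovery sequence. If `diam (supp μ) ≤ 1`, `α_k → ∞`,
`β_k = e^{1/√α_k}` and `μ_k` is the pushforward of `μ` under `x ↦ x/β_k`, then
`μ_k ⇀ μ` weakly, `E_{α_k,λ}(μ_k) ≤ e^{-√α_k} + e^{λ/√α_k}·∬|x-y|^{-λ}dμdμ`,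
and `limsup E_{α_k,λ}(μ_k) ≤ ∬|x-y|^{-λ}dμdμ`. -/
theorem stmt2 (n : ℕ) (hn : 1 ≤ n) (lam : ℝ) (hlam0 : 0 < lam) (hlamn : lam < n)
    (μ : Measure (Euc n)) (hμ : IsProbabilityMeasure μ)
    (hdiam : EMetric.diam (msupport μ) ≤ 1)
    (a : ℕ → ℝ) (ha : ∀ k, 0 < a k) (hatop : Tendsto a atTop atTop)
    (β : ℕ → ℝ) (hβ : ∀ k, β k = Real.exp (1 / Real.sqrt (a k)))
    (μs : ℕ → Measure (Euc n))
    (hμs : ∀ k, μs k = Measure.map (fun x => (β k)⁻¹ • x) μ) :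
    (∀ φ : BoundedContinuousFunction (Euc n) ℝ,
      Tendsto (fun k => ∫ x, φ x ∂(μs k)) atTop (𝓝 (∫ x, φ x ∂μ))) ∧
    (∀ k, energy n (a k) lam (μs k) ≤
      ENNReal.ofReal (Real.exp (-Real.sqrt (a k))) +
        ENNReal.ofReal (Real.exp (lam / Real.sqrt (a k))) * rieszEnergy n lam μ) ∧
    atTop.limsup (fun k => energy n (a k) lam (μs k)) ≤ rieszEnergy n lam μ := by
  have hsqrt : ∀ k, 0 < Real.sqrt (a k) := fun k => Real.sqrt_pos.2 (ha k)
  have hβpos : ∀ k, 0 < β k := fun k => (hβ k) ▸ Real.exp_pos _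
  set c : ℕ → ℝ := fun k => (β k)⁻¹ with hc
  have hcpos : ∀ k, 0 < c k := fun k => inv_pos.2 (hβpos k)
  have hT : ∀ k, Measurable fun x : Euc n => c k • x := fun k => (continuous_const_smul (c k)).measurable
  have hs_top : Tendsto (fun k => Real.sqrt (a k)) atTop atTop := by
    have h : Tendsto Real.sqrt atTop atTop := by
      rw [tendsto_atTop_atTop]
      intro b
      refine ⟨(max b 0) ^ 2, fun x hx => le_trans (le_max_left b 0) ?_⟩
      exact (Real.le_sqrt (le_max_right b 0) (le_trans (sq_nonneg _) hx)).2 hx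
    exact h.comp hatop
  -- Part 1: weak convergence
  have part1 : ∀ φ : BoundedContinuousFunction (Euc n) ℝ,
      Tendsto (fun k => ∫ x, φ x ∂(μs k)) atTop (𝓝 (∫ x, φ x ∂μ)) := by
    intro φ
    have heq : ∀ k, ∫ x, φ x ∂(μs k) = ∫ x, φ (c k • x) ∂μ := by
      intro k
      rw [hμs k, integral_map (hT k).aemeasurable φ.continuous.aestronglyMeasurable]
    simp_rw [heq]
    have hβ1 : Tendsto β atTop (𝓝 1) := by
      have h1 : Tendsto (fun k => 1 / Real.sqrt (a k)) atTop (𝓝 0) := by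
        simp_rw [one_div]
        exact tendsto_inv_atTop_zero.comp hs_top
      have h2 := (Real.continuous_exp.tendsto 0).comp h1
      have hfun : β = fun k => Real.exp (1 / Real.sqrt (a k)) := funext hβ
      rw [hfun]
      simpa [Function.comp_def] using h2
    have hc1 : Tendsto c atTop (𝓝 1) := by
      simpa using hβ1.inv₀ one_ne_zero
    refine tendsto_integral_of_dominated_convergence (fun _ => ‖φ‖) ?_ ?_ ?_ ?_
    · intro k; exact (φ.continuous.comp (continuous_const_smul _)).aestronglyMeasurable
    · exact integrable_const _
    · intro k; exact Eventually.of_forall fun x => φ.norm_coe_le_norm _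
    · refine Eventually.of_forall fun x => ?_
      have hx : Tendsto (fun k => c k • x) atTop (𝓝 x) := by
        simpa using hc1.smul_const x
      exact (φ.continuous.tendsto x).comp hx
  -- Part 2: energy bound
  have hS : μ (msupport μ)ᶜ = 0 := msupport_compl_null μ
  have haeS : ∀ᵐ x ∂μ, x ∈ msupport μ := by
    rw [ae_iff]
    exact hS
  have hmeas_joint : Measurable fun p : Euc n × Euc n => edist p.1 p.2 ^ (-lam) :=
    measurable_edist.pow_const _
  have hmeas_inner : Measurable fun x : Euc n => ∫⁻ y, edist x y ^ (-lam) ∂μ :=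
    hmeas_joint.lintegral_prod_right'
  have part2 : ∀ k, energy n (a k) lam (μs k) ≤
      ENNReal.ofReal (Real.exp (-Real.sqrt (a k))) +
        ENNReal.ofReal (Real.exp (lam / Real.sqrt (a k))) * rieszEnergy n lam μ := by
    intro k
    set A := ENNReal.ofReal (Real.exp (-Real.sqrt (a k))) with hA
    set B := ENNReal.ofReal (Real.exp (lam / Real.sqrt (a k))) with hB
    have hBne : B ≠ 0 := by
      rw [hB]
      simp [Real.exp_pos]
    -- key pointwise bound
    have key : ∀ x ∈ msupport μ, ∀ y ∈ msupport μ,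
        edist (c k • x) (c k • y) ^ (a k) + edist (c k • x) (c k • y) ^ (-lam)
          ≤ A + B * edist x y ^ (-lam) := by
      intro x hx y hy
      have hd1 : edist x y ≤ 1 := le_trans (EMetric.edist_le_diam_of_mem hx hy) hdiam
      have hsmul : edist (c k • x) (c k • y) = ENNReal.ofReal (c k) * edist x y := by
        rw [edist_smul₀, ENNReal.smul_def, smul_eq_mul, ← enorm_eq_nnnorm, Real.enorm_eq_ofReal (hcpos k).le]
      have hcA : ENNReal.ofReal (c k) ^ (a k) = A := by
        rw [ENNReal.ofReal_rpow_of_pos (hcpos k), hA]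
        congr 1
        rw [hc]
        simp only [hβ, ← Real.exp_neg]
        rw [← Real.exp_mul]
        congr 1
        rw [neg_mul, one_div, inv_mul_eq_div, Real.div_sqrt]
      have hcB : ENNReal.ofReal (c k) ^ (-lam) = B := by
        rw [ENNReal.ofReal_rpow_of_pos (hcpos k), hB]
        congr 1
        rw [hc]
        simp only [hβ, ← Real.exp_neg]
        rw [← Real.exp_mul]
        congr 1
        rw [neg_mul_neg, one_div, inv_mul_eq_div]
      have h1 : edist (c k • x) (c k • y) ^ (a k) ≤ A := by
        rw [hsmul, ← hcA]
        refine ENNReal.rpow_le_rpow ?_ (ha k).le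
        calc ENNReal.ofReal (c k) * edist x y ≤ ENNReal.ofReal (c k) * 1 :=
          mul_le_mul_right hd1 _
        _ = ENNReal.ofReal (c k) := mul_one _
      have h2 : edist (c k • x) (c k • y) ^ (-lam) = B * edist x y ^ (-lam) := by
        rw [hsmul, ← hcB]
        rcases eq_or_ne (edist x y) 0 with h0 | h0
        · rw [h0, mul_zero, ENNReal.zero_rpow_of_neg (neg_lt_zero.2 hlam0),
            ENNReal.mul_top]
          rw [hcB]
          exact hBne
        · rw [ENNReal.mul_rpow_of_ne_zero (by simp [hcpos k]) h0]
      rw [h2]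
      exact add_le_add h1 le_rfl
    -- rewrite the energy via the pushforward
    haveI : IsProbabilityMeasure (Measure.map (fun x : Euc n => c k • x) μ) :=
      Measure.isProbabilityMeasure_map (hT k).aemeasurable
    have hjointF : Measurable fun p : Euc n × Euc n =>
        edist p.1 p.2 ^ (a k) + edist p.1 p.2 ^ (-lam) :=
      (measurable_edist.pow_const _).add (measurable_edist.pow_const _)
    have hmap : energy n (a k) lam (μs k)
        = ∫⁻ x, ∫⁻ y, (edist (c k • x) (c k • y) ^ (a k)
            + edist (c k • x) (c k • y) ^ (-lam)) ∂μ ∂μ := by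
      rw [energy, hμs k]
      rw [lintegral_map hjointF.lintegral_prod_right' (hT k)]
      refine lintegral_congr fun x => ?_
      exact lintegral_map ((measurable_edist_right.pow_const _).add
        (measurable_edist_right.pow_const _)) (hT k)
    have hbound : energy n (a k) lam (μs k)
        ≤ ∫⁻ x, ∫⁻ y, (A + B * edist x y ^ (-lam)) ∂μ ∂μ := by
      rw [hmap]
      refine lintegral_mono_ae ?_
      filter_upwards [haeS] with x hx
      refine lintegral_mono_ae ?_
      filter_upwards [haeS] with y hy
      exact key x hx y hy
    have hcalc : ∫⁻ x, ∫⁻ y, (A + B * edist x y ^ (-lam)) ∂μ ∂μ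
        = A + B * rieszEnergy n lam μ := by
      have step1 : ∀ x : Euc n, ∫⁻ y, (A + B * edist x y ^ (-lam)) ∂μ
          = A + B * ∫⁻ y, edist x y ^ (-lam) ∂μ := by
        intro x
        rw [lintegral_add_left measurable_const, lintegral_const, measure_univ, mul_one,
          lintegral_const_mul _ (measurable_edist_right.pow_const _)]
      simp_rw [step1]
      rw [lintegral_add_left measurable_const, lintegral_const, measure_univ, mul_one,
        lintegral_const_mul _ hmeas_inner, rieszEnergy]
    exact hbound.trans_eq hcalc
  -- Part 3: limsup
  refine ⟨part1, part2, ?_⟩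
  have hc2 : Tendsto (fun k => ENNReal.ofReal (Real.exp (-Real.sqrt (a k)))) atTop (𝓝 0) := by
    have h := Real.tendsto_exp_neg_atTop_nhds_zero.comp hs_top
    simpa using ENNReal.tendsto_ofReal h
  have hc3 : Tendsto (fun k => ENNReal.ofReal (Real.exp (lam / Real.sqrt (a k)))) atTop (𝓝 1) := by
    have h0 : Tendsto (fun k => lam / Real.sqrt (a k)) atTop (𝓝 0) := by
      simp_rw [div_eq_mul_inv]
      simpa using (tendsto_inv_atTop_zero.comp hs_top).const_mul lam
    have h1 := (Real.continuous_exp.tendsto 0).comp h0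
    simp only [Function.comp_def, Real.exp_zero] at h1
    simpa using ENNReal.tendsto_ofReal h1
  have hRHS : Tendsto (fun k => ENNReal.ofReal (Real.exp (-Real.sqrt (a k))) +
      ENNReal.ofReal (Real.exp (lam / Real.sqrt (a k))) * rieszEnergy n lam μ)
      atTop (𝓝 (rieszEnergy n lam μ)) := by
    have h := hc2.add (ENNReal.Tendsto.mul_const (b := rieszEnergy n lam μ) hc3 (Or.inl one_ne_zero))
    simpa using h
  calc atTop.limsup (fun k => energy n (a k) lam (μs k))
      ≤ atTop.limsup (fun k => ENNReal.ofReal (Real.exp (-Real.sqrt (a k))) +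
          ENNReal.ofReal (Real.exp (lam / Real.sqrt (a k))) * rieszEnergy n lam μ) :=
        limsup_le_limsup (Eventually.of_forall part2)
    _ = rieszEnergy n lam μ := hRHS.limsup_eq
end
end

section
/- Let n ≥ 1, λ ∈ (0,n), let (α_k) be positive reals with α_k → ∞, and let (μ_k) be Borel probability measures on ℝ^n with sup_k E_{α_k,λ}(μ_k) < ∞. Then: (i) for every R > 1 and every k, E_{α_k,λ}(μ_k) ≥ R^{α_k} (1 − sup_{y∈ℝ^n} μ_k(B_R(y))), where B_R(y) is the closed ball of radius R centered at y; and consequently (ii) sup_{y∈ℝ^n} μ_k(B_R(y)) → 1 as k → ∞ for every R > 1. -/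
open MeasureTheory Filter ENNReal Metric Topology

noncomputable section

/-- The basic lower bound: part (i) of the statement for a single measure. -/
lemma energy_lower_bound (n : ℕ) (a lam R : ℝ) (ha : 0 < a) (hR : 1 < R)
    (μ : Measure (Euc n)) [IsProbabilityMeasure μ] :
    ENNReal.ofReal (R ^ a) * (1 - ⨆ y : Euc n, μ (closedBall y R)) ≤
      energy n a lam μ := by
  set S := ⨆ y : Euc n, μ (closedBall y R) with hSdef
  set c := ENNReal.ofReal (R ^ a) with hcdef
  have hR0 : (0:ℝ) < R := lt_trans one_pos hR
  have hkey : ∀ x : Euc n,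
      c * ((1:ℝ≥0∞) - S) ≤ ∫⁻ y, (edist x y ^ a + edist x y ^ (-lam)) ∂μ := by
    intro x
    have hmono : (1:ℝ≥0∞) - S ≤ μ ((closedBall x R)ᶜ) := by
      rw [measure_compl measurableSet_closedBall (measure_ne_top μ _), measure_univ]
      exact tsub_le_tsub_left (le_iSup (fun y : Euc n => μ (closedBall y R)) x) 1
    calc c * ((1:ℝ≥0∞) - S) ≤ c * μ ((closedBall x R)ᶜ) := by
          exact mul_le_mul_right hmono c
      _ = ∫⁻ y, ((closedBall x R)ᶜ).indicator (fun _ => c) y ∂μ := by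
          rw [lintegral_indicator_const measurableSet_closedBall.compl]
      _ ≤ ∫⁻ y, (edist x y ^ a + edist x y ^ (-lam)) ∂μ := by
          apply lintegral_mono
          intro y
          by_cases hy : y ∈ (closedBall x R)ᶜ
          · rw [Set.indicator_of_mem hy]
            have hd : R < dist x y := by
              simpa [dist_comm] using (mem_closedBall.not.mp hy)
            have h1 : c ≤ edist x y ^ a := by
              rw [hcdef, ← ENNReal.ofReal_rpow_of_pos hR0, edist_dist]
              exact ENNReal.rpow_le_rpow (ENNReal.ofReal_le_ofReal hd.le) ha.le
            exact le_trans h1 (self_le_add_right _ _)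
          · rw [Set.indicator_of_notMem hy]; exact zero_le
  calc c * ((1:ℝ≥0∞) - S) = ∫⁻ _x, c * ((1:ℝ≥0∞) - S) ∂μ := by
        rw [lintegral_const, measure_univ, mul_one]
    _ ≤ energy n a lam μ := lintegral_mono hkey

/-- the concentration estimate. If `sup_k E_{α_k,λ}(μ_k) < ∞` then
(i) `E_{α_k,λ}(μ_k) ≥ R^{α_k}(1 - sup_y μ_k(B_R(y)))` for every `R > 1`, and
(ii) `sup_y μ_k(B_R(y)) → 1` for every `R > 1`. -/
theorem stmt4 (n : ℕ) (hn : 1 ≤ n) (lam : ℝ) (hlam0 : 0 < lam) (hlamn : lam < n)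
    (a : ℕ → ℝ) (ha : ∀ k, 0 < a k) (hatop : Tendsto a atTop atTop)
    (μs : ℕ → Measure (Euc n)) (hμs : ∀ k, IsProbabilityMeasure (μs k))
    (hbdd : (⨆ k, energy n (a k) lam (μs k)) < ⊤) :
    (∀ R : ℝ, 1 < R → ∀ k,
      ENNReal.ofReal (R ^ (a k)) * (1 - ⨆ y : Euc n, μs k (closedBall y R)) ≤
        energy n (a k) lam (μs k)) ∧
    (∀ R : ℝ, 1 < R →
      Tendsto (fun k => ⨆ y : Euc n, μs k (closedBall y R)) atTop (𝓝 1)) := by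
  have hpart1 : ∀ R : ℝ, 1 < R → ∀ k,
      ENNReal.ofReal (R ^ (a k)) * (1 - ⨆ y : Euc n, μs k (closedBall y R)) ≤
        energy n (a k) lam (μs k) := by
    intro R hR k
    have := hμs k
    exact energy_lower_bound n (a k) lam R (ha k) hR (μs k)
  refine ⟨hpart1, ?_⟩
  intro R hR
  set C := ⨆ k, energy n (a k) lam (μs k) with hCdef
  have hC : C ≠ ⊤ := hbdd.ne
  set S : ℕ → ℝ≥0∞ := fun k => ⨆ y : Euc n, μs k (closedBall y R) with hSdef
  set r : ℕ → ℝ≥0∞ := fun k => ENNReal.ofReal (R ^ a k) with hrdef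
  have hR0 : (0:ℝ) < R := lt_trans one_pos hR
  -- the upper bound S k ≤ 1
  have hS1 : ∀ k, S k ≤ 1 := by
    intro k
    have := hμs k
    exact iSup_le fun y => prob_le_one
  -- the key estimate 1 - S k ≤ C * (r k)⁻¹
  have hkey : ∀ k, (1:ℝ≥0∞) - S k ≤ C * (r k)⁻¹ := by
    intro k
    have h1 : r k * (1 - S k) ≤ C :=
      le_trans (hpart1 R hR k) (le_iSup (fun k => energy n (a k) lam (μs k)) k)
    have hr0 : r k ≠ 0 := by
      simp [hrdef, ENNReal.ofReal_eq_zero, not_le, Real.rpow_pos_of_pos hR0]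
    have hrt : r k ≠ ⊤ := ENNReal.ofReal_ne_top
    rw [← div_eq_mul_inv]
    exact (ENNReal.le_div_iff_mul_le (Or.inl hr0) (Or.inl hrt)).2 (by rwa [mul_comm])
  -- C * (r k)⁻¹ → 0
  have hlim0 : Tendsto (fun k => C * (r k)⁻¹) atTop (𝓝 0) := by
    have hRx : Tendsto (fun x : ℝ => R ^ x) atTop atTop := by
      simp_rw [Real.rpow_def_of_pos hR0]
      exact Real.tendsto_exp_atTop.comp (tendsto_id.const_mul_atTop (Real.log_pos hR))
    have h2 : Tendsto r atTop (𝓝 ⊤) :=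
      ENNReal.tendsto_ofReal_atTop.comp (hRx.comp hatop)
    have h3 : Tendsto (fun k => (r k)⁻¹) atTop (𝓝 0) := by
      simpa using ENNReal.tendsto_inv_iff.2 h2
    simpa using ENNReal.Tendsto.const_mul h3 (Or.inr hC)
  -- lower bound tends to 1
  have hlow : Tendsto (fun k => (1:ℝ≥0∞) - C * (r k)⁻¹) atTop (𝓝 1) := by
    have := (ENNReal.continuous_sub_left (a := 1) one_ne_top).tendsto 0
    simpa [Function.comp_def] using this.comp hlim0
  refine tendsto_of_tendsto_of_tendsto_of_le_of_le hlow tendsto_const_nhds ?_ hS1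
  intro k
  exact tsub_le_iff_right.2 (by
    have := hkey k
    calc (1:ℝ≥0∞) ≤ S k + (1 - S k) := le_add_tsub
      _ ≤ S k + C * (r k)⁻¹ := add_le_add le_rfl this)
end
end

section
/- Let n ≥ 1, λ ∈ (0,n), and let μ be a Borel probability measure on ℝ^n minimizing E_{∞,λ} over all Borel probability measures. Then there exists a convex body W ⊂ ℝ^n of constant width 1 such that supp μ ⊂ W and C_λ(W) = sup{ C_λ(A) : A ⊂ ℝ^n, diam(A) ≤ 1 }; in particular the supremum on the right is attained, and μ attains the infimum defining C_λ(W). -/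
open MeasureTheory Filter ENNReal Metric Topology
open RealInnerProductSpace

set_option maxHeartbeats 1000000

noncomputable section

/-- The limiting functional `E_{∞,λ}`. -/
def limitEnergy (n : ℕ) (lam : ℝ) (μ : Measure (Euc n)) : ℝ≥0∞ :=
  if EMetric.diam (msupport μ) ≤ 1 then rieszEnergy n lam μ else ⊤

/-- The `λ`-capacity of a set `A ⊆ ℝ^n`. -/
def capacity (n : ℕ) (lam : ℝ) (A : Set (Euc n)) : ℝ≥0∞ :=
  (⨅ ν : {ν : Measure (Euc n) // IsProbabilityMeasure ν ∧ msupport ν ⊆ A},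
    rieszEnergy n lam ν.1)⁻¹

/-- A convex body of constant width `1`: a compact convex set with nonempty
interior whose width `sup_{x∈W}⟨u,x⟩ - inf_{x∈W}⟨u,x⟩` equals `1` in every
unit direction `u`. -/
def IsConstWidthBody (n : ℕ) (W : Set (Euc n)) : Prop :=
  IsCompact W ∧ Convex ℝ W ∧ (interior W).Nonempty ∧
    ∀ u : Euc n, ‖u‖ = 1 →
      sSup ((fun x => (inner ℝ u x : ℝ)) '' W) - sInf ((fun x => (inner ℝ u x : ℝ)) '' W) = 1


lemma lintegral_riesz_ball_lt_top (n : ℕ) (hn : 1 ≤ n) (lam : ℝ) (hlam0 : 0 < lam)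
    (hlamn : lam < n) :
    ∫⁻ z in closedBall (0 : Euc n) 1, (ENNReal.ofReal ‖z‖) ^ (-lam) ∂volume < ⊤ := by
  haveI : Nonempty (Fin n) := ⟨⟨0, hn⟩⟩
  haveI : Nontrivial (Euc n) := by
    refine nontrivial_of_ne (EuclideanSpace.single (Classical.arbitrary (Fin n)) (1:ℝ)) 0 ?_
    intro h
    have := congrArg (fun f => f (Classical.arbitrary (Fin n))) h
    simpa using this
  haveI : NullSingletonClass (volume : Measure (Euc n)) := inferInstance
  set F : Euc n → ℝ≥0∞ := fun z => (ENNReal.ofReal ‖z‖) ^ (-lam) with hF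
  set q : ℝ := (2:ℝ) ^ (lam - n) with hq
  have hq0 : 0 < q := Real.rpow_pos_of_pos (by norm_num) _
  have hq1 : q < 1 := by
    rw [hq]
    have hneg : lam - n < 0 := by linarith
    calc (2:ℝ) ^ (lam - n) < (2:ℝ) ^ (0:ℝ) :=
          Real.rpow_lt_rpow_of_exponent_lt (by norm_num) hneg
    _ = 1 := by norm_num
  set c : ℕ → ℝ≥0∞ := fun k => ENNReal.ofReal (((2:ℝ) ^ (k+1)) ^ lam) with hc
  set G : Euc n → ℝ≥0∞ := fun z =>
    ∑' k : ℕ, (closedBall (0:Euc n) (((2:ℝ)^k)⁻¹)).indicator (fun _ => c k) z with hG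
  have hGmeas : Measurable G := by
    apply Measurable.ennreal_tsum
    intro k
    exact measurable_const.indicator measurableSet_closedBall
  have hpoint : ∀ z ∈ closedBall (0:Euc n) 1 \ ({0} : Set (Euc n)), F z ≤ G z := by
    rintro z ⟨hz1, hz0⟩
    have hz0' : 0 < ‖z‖ := by
      simpa [norm_pos_iff] using Set.mem_singleton_iff.not.mp hz0
    have hz1' : ‖z‖ ≤ 1 := by simpa [mem_closedBall, dist_zero_right] using hz1
    have hex : ∃ m : ℕ, ((2:ℝ)^(m+1))⁻¹ < ‖z‖ := by
      obtain ⟨m, hm⟩ := exists_pow_lt_of_lt_one hz0' (by norm_num : (1:ℝ)/2 < 1)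
      refine ⟨m, lt_of_le_of_lt ?_ hm⟩
      rw [one_div, inv_pow]
      exact inv_anti₀ (by positivity) (pow_le_pow_right₀ (by norm_num) (by omega))
    classical
    set m := Nat.find hex with hm
    have hmlt : ((2:ℝ)^(m+1))⁻¹ < ‖z‖ := Nat.find_spec hex
    have hzle : ‖z‖ ≤ ((2:ℝ)^m)⁻¹ := by
      rcases Nat.eq_zero_or_pos m with h0 | hpos
      · rw [h0]; simpa using hz1'
      · obtain ⟨m', hm'⟩ := Nat.exists_eq_succ_of_ne_zero hpos.ne'
        have hmin := Nat.find_min hex (m := m') (by omega)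
        push_neg at hmin
        rw [hm']
        simpa [hm'] using hmin
    have hmem : z ∈ closedBall (0:Euc n) (((2:ℝ)^m)⁻¹) := by
      simpa [mem_closedBall, dist_zero_right] using hzle
    have hFle : F z ≤ c m := by
      rw [hF, hc]
      have h1 : (ENNReal.ofReal ‖z‖) ^ (-lam) ≤ (ENNReal.ofReal (((2:ℝ)^(m+1))⁻¹)) ^ (-lam) := by
        rw [ENNReal.rpow_neg, ENNReal.rpow_neg]
        exact ENNReal.inv_le_inv.mpr
          (ENNReal.rpow_le_rpow (ENNReal.ofReal_le_ofReal hmlt.le) hlam0.le)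
      refine h1.trans_eq ?_
      rw [ENNReal.ofReal_rpow_of_pos (by positivity)]
      congr 1
      rw [Real.inv_rpow (by positivity), Real.rpow_neg (by positivity), inv_inv]
    calc F z ≤ c m := hFle
    _ = (closedBall (0:Euc n) (((2:ℝ)^m)⁻¹)).indicator (fun _ => c m) z :=
          (Set.indicator_of_mem hmem (fun _ => c m)).symm
    _ ≤ G z := ENNReal.le_tsum m
  -- reduce to punctured ball
  have h00 : volume (closedBall (0:Euc n) 1 ∩ ({0}:Set (Euc n))) = 0 :=
    measure_mono_null Set.inter_subset_right (measure_singleton 0)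
  have hae : (closedBall (0:Euc n) 1 \ ({0}:Set (Euc n))) =ᵐ[volume] closedBall (0:Euc n) 1 :=
    diff_ae_eq_self.mpr h00
  rw [← setLIntegral_congr hae]
  have hle : ∫⁻ z in closedBall (0:Euc n) 1 \ ({0}:Set (Euc n)), F z ∂volume
      ≤ ∫⁻ z, G z ∂volume :=
    le_trans (setLIntegral_mono hGmeas hpoint) (setLIntegral_le_lintegral _ _)
  refine lt_of_le_of_lt hle ?_
  -- compute ∫ G
  rw [hG, lintegral_tsum (fun k => (measurable_const.indicator measurableSet_closedBall).aemeasurable)]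
  have hterm : ∀ k : ℕ, ∫⁻ z, (closedBall (0:Euc n) (((2:ℝ)^k)⁻¹)).indicator (fun _ => c k) z ∂volume
      = c k * (ENNReal.ofReal ((((2:ℝ)^k)⁻¹) ^ n) * volume (ball (0:Euc n) 1)) := by
    intro k
    rw [lintegral_indicator measurableSet_closedBall, setLIntegral_const]
    rw [Measure.addHaar_closedBall _ _ (by positivity)]
    rw [finrank_euclideanSpace_fin]
  simp only [hterm]
  -- bound each term by (2^lam * q^k) * volume(ball)
  have hV : volume (ball (0:Euc n) 1) < ⊤ := measure_ball_lt_top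
  have hterm2 : ∀ k : ℕ, c k * (ENNReal.ofReal ((((2:ℝ)^k)⁻¹) ^ n) * volume (ball (0:Euc n) 1))
      = (ENNReal.ofReal ((2:ℝ)^lam) * (ENNReal.ofReal q) ^ k) * volume (ball (0:Euc n) 1) := by
    intro k
    rw [hc]
    rw [← mul_assoc, ← ENNReal.ofReal_mul (by positivity)]
    congr 2
    · -- real computation
      rw [← ENNReal.ofReal_pow hq0.le, ← ENNReal.ofReal_mul (by positivity)]
      congr 1
      rw [hq]
      rw [← Real.rpow_natCast ((2:ℝ)^(lam-(n:ℝ))) k, ← Real.rpow_natCast (2:ℝ) (k+1),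
        ← Real.rpow_natCast (2:ℝ) k, ← Real.rpow_mul (by norm_num),
        ← Real.rpow_natCast (((2:ℝ)^((k:ℝ)))⁻¹) n, Real.inv_rpow (by positivity),
        ← Real.rpow_neg (by positivity), ← Real.rpow_mul (by norm_num),
        ← Real.rpow_mul (by norm_num), ← Real.rpow_add (by norm_num),
        ← Real.rpow_add (by norm_num)]
      congr 1
      push_cast
      ring
  simp only [hterm2]
  rw [ENNReal.tsum_mul_right, ENNReal.tsum_mul_left, ENNReal.tsum_geometric]
  have h1 : (1 - ENNReal.ofReal q)⁻¹ < ⊤ := by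
    rw [ENNReal.inv_lt_top]
    rw [tsub_pos_iff_lt]
    exact lt_of_lt_of_le (ENNReal.ofReal_lt_one.mpr hq1) le_rfl
  exact ENNReal.mul_lt_top (ENNReal.mul_lt_top ENNReal.ofReal_lt_top h1) hV

lemma exists_nice_measure (n : ℕ) (hn : 1 ≤ n) (lam : ℝ) (hlam0 : 0 < lam) (hlamn : lam < n) :
    ∃ ν : Measure (Euc n), IsProbabilityMeasure ν ∧ EMetric.diam (msupport ν) ≤ 1 ∧
      rieszEnergy n lam ν < ⊤ := by
  set B : Set (Euc n) := closedBall 0 (1/2) with hB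
  have hB0 : 0 < volume B := measure_closedBall_pos _ _ (by norm_num)
  have hBt : volume B < ⊤ := measure_closedBall_lt_top
  set cν : ℝ≥0∞ := (volume B)⁻¹ with hcν
  have hcνt : cν < ⊤ := ENNReal.inv_lt_top.mpr hB0
  set ν : Measure (Euc n) := cν • volume.restrict B with hν
  have hprob : IsProbabilityMeasure ν := by
    constructor
    rw [hν, Measure.smul_apply, smul_eq_mul, Measure.restrict_apply MeasurableSet.univ,
      Set.univ_inter, hcν]
    exact ENNReal.inv_mul_cancel hB0.ne' hBt.ne
  have hsupp : msupport ν ⊆ B := by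
    intro x hx
    by_contra hxB
    have h1 : (0:ℝ≥0∞) < ν Bᶜ :=
      hx Bᶜ (isClosed_closedBall.isOpen_compl) hxB
    have h2 : ν Bᶜ = 0 := by
      rw [hν, Measure.smul_apply, smul_eq_mul,
        Measure.restrict_apply (measurableSet_closedBall.compl), Set.compl_inter_self, measure_empty,
        mul_zero]
    rw [h2] at h1; exact lt_irrefl _ h1
  have hdiam : EMetric.diam (msupport ν) ≤ 1 := by
    refine le_trans (EMetric.diam_mono hsupp) (EMetric.diam_le ?_)
    intro x hx y hy
    rw [edist_dist, ← ENNReal.ofReal_one]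
    apply ENNReal.ofReal_le_ofReal
    calc dist x y ≤ dist x 0 + dist y 0 := dist_triangle_right x y 0
    _ ≤ 1/2 + 1/2 := add_le_add (mem_closedBall.mp hx) (mem_closedBall.mp hy)
    _ = 1 := by norm_num
  refine ⟨ν, hprob, hdiam, ?_⟩
  set I : ℝ≥0∞ := ∫⁻ z in closedBall (0 : Euc n) 1, (ENNReal.ofReal ‖z‖) ^ (-lam) ∂volume with hI
  have hIt : I < ⊤ := lintegral_riesz_ball_lt_top n hn lam hlam0 hlamn
  set M : ℝ≥0∞ := cν * (I + volume B) with hM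
  have hMt : M < ⊤ :=
    ENNReal.mul_lt_top hcνt (ENNReal.add_lt_top.mpr ⟨hIt, hBt⟩)
  have hinner : ∀ x : Euc n, ∫⁻ y, edist x y ^ (-lam) ∂ν ≤ M := by
    intro x
    have hGfun : ∀ y : Euc n, edist x y ^ (-lam) = (ENNReal.ofReal ‖x - y‖) ^ (-lam) := by
      intro y; rw [edist_dist, dist_eq_norm]
    set G : Euc n → ℝ≥0∞ := fun z => (ENNReal.ofReal ‖z‖) ^ (-lam) with hGdef
    have hmp : MeasurePreserving (fun z : Euc n => x - z) volume volume :=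
      Measure.measurePreserving_sub_left volume x
    have hemb : MeasurableEmbedding (fun z : Euc n => x - z) :=
      (Homeomorph.subLeft x).measurableEmbedding
    set S : Set (Euc n) := (fun z : Euc n => x - z) ⁻¹' B with hS
    have hSmeas : volume S = volume B := hmp.measure_preimage_emb hemb B
    have step1 : ∫⁻ y in B, G (x - y) ∂volume = ∫⁻ z in S, G z ∂volume := by
      have := hmp.setLIntegral_comp_preimage_emb hemb (fun b => G (x - b)) B
      rw [← this]
      apply lintegral_congr
      intro a; simp [_root_.sub_sub_cancel]
    have step2 : ∫⁻ z in S, G z ∂volume ≤ I + volume B := by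
      have hsplit : S = (S ∩ closedBall (0:Euc n) 1) ∪ (S \ closedBall (0:Euc n) 1) :=
        (Set.inter_union_diff S _).symm
      calc ∫⁻ z in S, G z ∂volume
          = ∫⁻ z in (S ∩ closedBall (0:Euc n) 1) ∪ (S \ closedBall (0:Euc n) 1), G z ∂volume := by
            rw [← hsplit]
      _ ≤ (∫⁻ z in S ∩ closedBall (0:Euc n) 1, G z ∂volume)
            + ∫⁻ z in S \ closedBall (0:Euc n) 1, G z ∂volume := lintegral_union_le _ _ _
      _ ≤ I + volume B := by
            apply add_le_add
            · exact lintegral_mono_set Set.inter_subset_right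
            · calc ∫⁻ z in S \ closedBall (0:Euc n) 1, G z ∂volume
                  ≤ ∫⁻ _ in S \ closedBall (0:Euc n) 1, (1:ℝ≥0∞) ∂volume := by
                    apply setLIntegral_mono measurable_const
                    intro z hz
                    have hz1 : 1 < ‖z‖ := by
                      have := hz.2
                      simpa [mem_closedBall, dist_zero_right] using this
                    exact ENNReal.rpow_le_one_of_one_le_of_neg
                      (by simpa using ENNReal.one_le_ofReal.mpr hz1.le) (by linarith)
              _ = volume (S \ closedBall (0:Euc n) 1) := by
                    rw [setLIntegral_const, one_mul]
              _ ≤ volume S := measure_mono Set.diff_subset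
              _ = volume B := hSmeas
    calc ∫⁻ y, edist x y ^ (-lam) ∂ν = cν * ∫⁻ y in B, G (x - y) ∂volume := by
          rw [hν, lintegral_smul_measure]
          congr 1
          apply lintegral_congr
          intro y; rw [hGfun y]
    _ = cν * ∫⁻ z in S, G z ∂volume := by rw [step1]
    _ ≤ M := by rw [hM]; exact mul_le_mul_right step2 _
  calc rieszEnergy n lam ν ≤ ∫⁻ _, M ∂ν := lintegral_mono hinner
  _ = M := by rw [lintegral_const, measure_univ, mul_one]
  _ < ⊤ := hMt

section Width

variable {K : Set (Euc n)} (hch : ∀ x, x ∈ K ↔ ∀ y ∈ K, dist x y ≤ 1)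

include hch

lemma Kpair : ∀ x ∈ K, ∀ y ∈ K, dist x y ≤ 1 := fun x hx => (hch x).mp hx

lemma Kne : K.Nonempty := by
  rcases Set.eq_empty_or_nonempty K with h | h
  · exact ⟨0, (hch 0).mpr (by simp [h])⟩
  · exact h

lemma Kclosed : IsClosed K := by
  have : K = ⋂ y ∈ K, closedBall y 1 := by
    ext x
    simp only [Set.mem_iInter, mem_closedBall]
    exact hch x
  rw [this]
  exact isClosed_biInter fun y _ => isClosed_closedBall

lemma Kcompact : IsCompact K := by
  obtain ⟨y₀, hy₀⟩ := Kne hch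
  refine IsCompact.of_isClosed_subset (isCompact_closedBall y₀ 1) (Kclosed hch) ?_
  intro x hx
  exact mem_closedBall.mpr (Kpair hch x hx y₀ hy₀)

lemma Kconvex : Convex ℝ K := by
  have hKeq : K = ⋂ y ∈ K, closedBall y 1 := by
    ext x
    simp only [Set.mem_iInter, mem_closedBall]
    exact hch x
  rw [hKeq]
  exact convex_iInter fun y => convex_iInter fun _ => convex_closedBall _ _

/-- the key geometric lemma: each supporting direction admits a diametral chord. -/
lemma exists_antipode (u : Euc n) (hu : ‖u‖ = 1) :
    ∃ a ∈ K, a - u ∈ K ∧ ∀ y ∈ K, ⟪u, y⟫ ≤ ⟪u, a⟫ := by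
  classical
  have hcont : Continuous (fun x : Euc n => ⟪u, x⟫) := by
    exact Continuous.inner continuous_const continuous_id
  obtain ⟨a, haK, hamax⟩ :=
    (Kcompact hch).exists_isMaxOn (Kne hch) hcont.continuousOn
  have hamax' : ∀ y ∈ K, ⟪u, y⟫ ≤ ⟪u, a⟫ := fun y hy => hamax hy
  set Z : Set (Euc n) := {z | ‖z‖ = 1 ∧ a - z ∈ K} with hZ
  -- cap inequality
  have hcap : ∀ z ∈ Z, ∀ t ∈ K, ‖a - t‖^2 / 2 ≤ ⟪z, a - t⟫ := by
    rintro z ⟨hz1, hzK⟩ t ht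
    have hd : dist (a - z) t ≤ 1 := Kpair hch _ hzK t ht
    have hd2 : ‖(a - t) - z‖ ≤ 1 := by
      rw [dist_eq_norm] at hd
      rw [show (a - t) - z = a - z - t by abel]
      exact hd
    have hexp : ‖(a - t) - z‖^2 = ‖a - t‖^2 - 2 * ⟪a - t, z⟫ + ‖z‖^2 := norm_sub_sq_real _ _
    have h1 : ‖(a - t) - z‖^2 ≤ 1 := by nlinarith [norm_nonneg ((a - t) - z)]
    rw [real_inner_comm]
    nlinarith [hexp, hz1]
  -- Conclusion A: no strictly improving direction
  have hA : ∀ v : Euc n, 0 < ⟪u, v⟫ → ¬(∀ z ∈ Z, ⟪v, z⟫ < 0) := by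
    intro v huv hvz
    have hclaim : ∃ ε : ℝ, 0 < ε ∧ ∀ y ∈ K, dist (a + ε • v) y ≤ 1 := by
      by_contra hcl
      push_neg at hcl
      have hseq : ∀ k : ℕ, ∃ y ∈ K, 1 < dist (a + (1/((k:ℝ)+1)) • v) y := by
        intro k
        obtain ⟨y, hy, hdy⟩ := hcl (1/((k:ℝ)+1)) (by positivity)
        exact ⟨y, hy, hdy⟩
      choose g hgK hgd using hseq
      obtain ⟨y₀, hy₀K, φ, hφ, hconv⟩ := (Kcompact hch).tendsto_subseq hgK
      have hεto : Tendsto (fun j : ℕ => 1/((φ j : ℝ)+1)) atTop (𝓝 0) :=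
        tendsto_one_div_add_atTop_nhds_zero_nat.comp hφ.tendsto_atTop
      -- dist a y₀ = 1
      have hdist_tendsto :
          Tendsto (fun j => dist (a + (1/((φ j:ℝ)+1)) • v) (g (φ j))) atTop (𝓝 (dist a y₀)) := by
        have h1 : Tendsto (fun j => a + (1/((φ j:ℝ)+1)) • v) atTop (𝓝 a) := by
          have := hεto.smul_const v
          rw [zero_smul] at this
          simpa using tendsto_const_nhds.add this
        exact h1.dist hconv
      have hge : 1 ≤ dist a y₀ :=
        ge_of_tendsto hdist_tendsto (Eventually.of_forall fun j => (hgd (φ j)).le)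
      have hle : dist a y₀ ≤ 1 := Kpair hch a haK y₀ hy₀K
      have hz0 : (a - y₀) ∈ Z := by
        refine ⟨?_, by simpa using hy₀K⟩
        rw [← dist_eq_norm]
        linarith
      -- inner product limit
      have hinner_bd : ∀ j : ℕ, -(1/((φ j:ℝ)+1)) * ‖v‖^2 / 2 ≤ ⟪a - g (φ j), v⟫ := by
        intro j
        set ε := 1/((φ j:ℝ)+1) with hεd
        have hεpos : 0 < ε := by positivity
        have h1 : 1 < dist (a + ε • v) (g (φ j)) := hgd (φ j)
        have h2 : ‖(a - g (φ j)) + ε • v‖^2 > 1 := by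
          rw [dist_eq_norm] at h1
          have : a + ε • v - g (φ j) = (a - g (φ j)) + ε • v := by abel
          rw [this] at h1
          nlinarith [norm_nonneg ((a - g (φ j)) + ε • v)]
        have h3 : ‖a - g (φ j)‖ ≤ 1 := by
          rw [← dist_eq_norm]; exact Kpair hch a haK _ (hgK (φ j))
        have hexp : ‖(a - g (φ j)) + ε • v‖^2
            = ‖a - g (φ j)‖^2 + 2 * ⟪a - g (φ j), ε • v⟫ + ‖ε • v‖^2 :=
          norm_add_sq_real _ _
        rw [real_inner_smul_right] at hexp
        have h4 : ‖ε • v‖^2 = ε^2 * ‖v‖^2 := by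
          rw [norm_smul]
          simp [abs_of_pos hεpos]
          ring
        have h3' : ‖a - g (φ j)‖^2 ≤ 1 := by nlinarith [norm_nonneg (a - g (φ j))]
        by_contra hcon
        push_neg at hcon
        nlinarith [mul_lt_mul_of_pos_left hcon hεpos]
      have hinner_tendsto : Tendsto (fun j => ⟪a - g (φ j), v⟫) atTop (𝓝 ⟪a - y₀, v⟫) := by
        exact ((tendsto_const_nhds.sub hconv).inner tendsto_const_nhds)
      have hlhs_tendsto : Tendsto (fun j : ℕ => -(1/((φ j:ℝ)+1)) * ‖v‖^2 / 2) atTop (𝓝 0) := by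
        have := (hεto.neg.mul_const (‖v‖^2)).div_const 2
        simpa using this
      have hge0 : 0 ≤ ⟪a - y₀, v⟫ :=
        le_of_tendsto_of_tendsto' hlhs_tendsto hinner_tendsto hinner_bd
      have := hvz (a - y₀) hz0
      rw [real_inner_comm] at this
      linarith
    obtain ⟨ε, hε, hball⟩ := hclaim
    have hin : a + ε • v ∈ K := (hch _).mpr hball
    have := hamax' _ hin
    rw [inner_add_right, real_inner_smul_right] at this
    nlinarith
  -- separation: some positive multiple of u lies in the closed convex hull of Z
  have hτ : ∃ τ : ℝ, 0 < τ ∧ τ ≤ 1 ∧ τ • u ∈ closure (convexHull ℝ Z) := by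
    by_contra hno
    push_neg at hno
    set cl := closure (convexHull ℝ Z) with hcl
    have hclconv : Convex ℝ cl := (convex_convexHull ℝ Z).closure
    have hclclosed : IsClosed cl := isClosed_closure
    have hclball : cl ⊆ closedBall (0 : Euc n) 1 := by
      apply closure_minimal _ isClosed_closedBall
      apply convexHull_min _ (convex_closedBall _ _)
      rintro z ⟨hz1, -⟩
      simp [mem_closedBall, dist_zero_right, hz1.le]
    have hcl0 : (0 : Euc n) ∉ cl := by
      rcases Set.eq_empty_or_nonempty Z with hZe | ⟨z₁, hz₁⟩
      · simp [hcl, hZe]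
      · have hhalf : cl ⊆ {x : Euc n | 1/2 ≤ ⟪x, z₁⟫} := by
          apply closure_minimal _ _
          · apply convexHull_min _ _
            · intro z hz
              have := hcap z hz (a - z₁) hz₁.2
              have h2 : a - (a - z₁) = z₁ := by abel
              rw [h2] at this
              rw [hz₁.1] at this
              simpa using this
            · exact convex_halfSpace_ge ⟨fun a b => inner_add_left a b z₁,
                fun c x => real_inner_smul_left x z₁ c⟩ _
          · have : Continuous fun x : Euc n => ⟪x, z₁⟫ :=
              continuous_id.inner continuous_const
            exact isClosed_le continuous_const this
        intro h0
        have := hhalf h0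
        simp at this
        linarith
    -- separate the segment [0, 2u] from cl
    have hseg : IsCompact (segment ℝ (0 : Euc n) ((2:ℝ) • u)) := by
      rw [← convexHull_pair]
      exact ((Set.finite_singleton _).insert _).isCompact_convexHull (𝕜 := ℝ)
    have hdisj : Disjoint (segment ℝ (0 : Euc n) ((2:ℝ) • u)) cl := by
      rw [Set.disjoint_left]
      rintro x hxseg hxcl
      rw [segment_eq_image] at hxseg
      obtain ⟨θ, hθ, hxθ⟩ := hxseg
      have hx : x = (2*θ) • u := by
        have hxθ' : (1 - θ) • (0:Euc n) + θ • ((2:ℝ) • u) = x := hxθ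
        rw [← hxθ', smul_zero, zero_add, smul_smul, mul_comm]
      have hnorm : ‖x‖ = 2*θ := by
        rw [hx, norm_smul, hu, mul_one]
        exact abs_of_nonneg (by linarith [hθ.1])
      have hle1 : 2*θ ≤ 1 := by
        have := hclball hxcl
        rw [mem_closedBall, dist_zero_right] at this
        linarith [hnorm ▸ this]
      have hpos : 0 < 2*θ := by
        rcases lt_or_eq_of_le hθ.1 with h | h
        · linarith
        · exfalso
          apply hcl0
          rw [← h] at hxθ
          simp at hxθ
          rw [← hxθ] at hxcl
          simpa using hxcl
      exact hno (2*θ) hpos hle1 (hx ▸ hxcl)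
    obtain ⟨f, s, t, hfs, hst, hft⟩ :=
      geometric_hahn_banach_compact_closed (convex_segment _ _) hseg hclconv hclclosed hdisj
    have hs0 : 0 < s := by
      have := hfs 0 (left_mem_segment ℝ _ _)
      simpa using this
    have hfu : f u < s := by
      have h2u := hfs ((2:ℝ) • u) (right_mem_segment ℝ _ _)
      rw [_root_.map_smul, smul_eq_mul] at h2u
      linarith
    set w : Euc n := (InnerProductSpace.toDual ℝ (Euc n)).symm f with hw
    have hwx : ∀ x : Euc n, ⟪w, x⟫ = f x := fun x => InnerProductSpace.toDual_symm_apply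
    set κ : ℝ := (max (f u) 0 + t) / 2 with hκ
    have hκpos : 0 < κ := by
      have : 0 < t := lt_trans hs0 hst
      have := le_max_right (f u) 0
      rw [hκ]; linarith
    have hκfu : f u < κ := by
      have h1 : f u ≤ max (f u) 0 := le_max_left _ _
      have h2 : max (f u) 0 < t := by
        rcases max_cases (f u) 0 with ⟨h, -⟩ | ⟨h, -⟩ <;> rw [h]
        · linarith
        · linarith [lt_trans hs0 hst]
      rw [hκ]; linarith
    have hκt : κ < t := by
      have h2 : max (f u) 0 < t := by
        rcases max_cases (f u) 0 with ⟨h, -⟩ | ⟨h, -⟩ <;> rw [h]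
        · linarith
        · linarith [lt_trans hs0 hst]
      rw [hκ]; linarith
    set v : Euc n := κ • u - w with hv
    have huv : 0 < ⟪u, v⟫ := by
      rw [hv, inner_sub_right, real_inner_smul_right, real_inner_self_eq_norm_sq, hu]
      have : ⟪u, w⟫ = f u := by rw [real_inner_comm]; exact hwx u
      rw [this]
      nlinarith
    refine hA v huv ?_
    intro z hz
    have hfz : t < f z :=
      hft z (subset_closure (subset_convexHull ℝ Z hz))
    have huz : ⟪u, z⟫ ≤ 1 := by
      have := real_inner_le_norm u z
      rw [hu, hz.1] at this
      simpa using this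
    rw [hv, inner_sub_left, real_inner_smul_left]
    have : ⟪w, z⟫ = f z := hwx z
    rw [this]
    nlinarith
  obtain ⟨τ, hτ0, hτ1, hτmem⟩ := hτ
  refine ⟨a, haK, ?_, hamax'⟩
  rw [hch]
  intro y hy
  -- halfspace argument
  have hhalf : closure (convexHull ℝ Z) ⊆ {x : Euc n | ‖a - y‖^2/2 ≤ ⟪x, a - y⟫} := by
    apply closure_minimal _ _
    · apply convexHull_min _ _
      · intro z hz
        exact hcap z hz y hy
      · exact convex_halfSpace_ge ⟨fun p q => inner_add_left p q (a-y),
          fun c x => real_inner_smul_left x (a-y) c⟩ _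
    · exact isClosed_le continuous_const (continuous_id.inner continuous_const)
  have hmem := hhalf hτmem
  simp only [Set.mem_setOf_eq, real_inner_smul_left] at hmem
  have hinner : ‖a - y‖^2/2 ≤ ⟪u, a - y⟫ := by
    nlinarith [sq_nonneg ‖a - y‖]
  have hexp : ‖(a - u) - y‖^2 = ‖(a - y)‖^2 - 2*⟪a - y, u⟫ + ‖u‖^2 := by
    have : (a - u) - y = (a - y) - u := by abel
    rw [this]
    exact norm_sub_sq_real _ _
  rw [dist_eq_norm]
  rw [real_inner_comm] at hinner
  nlinarith [norm_nonneg ((a - u) - y), hu]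

end Width

section Width2

variable {n : ℕ} {K : Set (Euc n)} (hch : ∀ x, x ∈ K ↔ ∀ y ∈ K, dist x y ≤ 1)

include hch

lemma width_eq_one (u : Euc n) (hu : ‖u‖ = 1) :
    sSup ((fun x => (inner ℝ u x : ℝ)) '' K) - sInf ((fun x => (inner ℝ u x : ℝ)) '' K) = 1 := by
  obtain ⟨a, haK, hauK, hamax⟩ := exists_antipode hch u hu
  set J : Set ℝ := (fun x => (inner ℝ u x : ℝ)) '' K with hJ
  have hJne : J.Nonempty := ⟨_, Set.mem_image_of_mem _ haK⟩
  have hbddA : BddAbove J := by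
    refine ⟨⟪u, a⟫, ?_⟩
    rintro p ⟨x, hx, rfl⟩
    exact hamax x hx
  have hbddB : BddBelow J := by
    refine ⟨⟪u, a⟫ - 1, ?_⟩
    rintro p ⟨x, hx, rfl⟩
    have h1 : ⟪u, a - x⟫ ≤ 1 := by
      have h2 := real_inner_le_norm u (a - x)
      have h3 : ‖a - x‖ ≤ 1 := by
        rw [← dist_eq_norm]; exact Kpair hch a haK x hx
      nlinarith [hu]
    rw [inner_sub_right] at h1
    simp only
    linarith
  have hSup : sSup J = ⟪u, a⟫ := by
    apply le_antisymm
    · apply csSup_le hJne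
      rintro p ⟨x, hx, rfl⟩
      exact hamax x hx
    · exact le_csSup hbddA (Set.mem_image_of_mem _ haK)
  have hval : (inner ℝ u (a - u) : ℝ) = ⟪u, a⟫ - 1 := by
    rw [inner_sub_right, real_inner_self_eq_norm_sq, hu]
    norm_num
  have hInf : sInf J = ⟪u, a⟫ - 1 := by
    apply le_antisymm
    · refine csInf_le hbddB ?_
      refine ⟨a - u, hauK, hval⟩
    · apply le_csInf hJne
      rintro p ⟨x, hx, rfl⟩
      have h1 : ⟪u, a - x⟫ ≤ 1 := by
        have h2 := real_inner_le_norm u (a - x)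
        have h3 : ‖a - x‖ ≤ 1 := by
          rw [← dist_eq_norm]; exact Kpair hch a haK x hx
        nlinarith [hu]
      rw [inner_sub_right] at h1
      simp only
      linarith
  rw [hSup, hInf]
  ring

lemma interior_nonempty : (interior K).Nonempty := by
  rw [Convex.interior_nonempty_iff_affineSpan_eq_top (Kconvex hch)]
  by_contra htop
  have hKne := Kne hch
  obtain ⟨x₀, hx₀⟩ := Kne hch
  have hdir : (affineSpan ℝ K).direction ≠ ⊤ := by
    intro h
    exact htop ((AffineSubspace.direction_eq_top_iff_of_nonempty
      ((affineSpan_nonempty ℝ).mpr hKne)).mp h)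
  have horth : ((affineSpan ℝ K).direction)ᗮ ≠ ⊥ := by
    intro h
    exact hdir (Submodule.orthogonal_eq_bot_iff.mp h)
  obtain ⟨v, hvmem, hvne⟩ := Submodule.exists_mem_ne_zero_of_ne_bot horth
  set u : Euc n := (‖v‖:ℝ)⁻¹ • v with hudef
  have hu : ‖u‖ = 1 := by
    rw [hudef]
    exact norm_smul_inv_norm hvne
  have humem : u ∈ ((affineSpan ℝ K).direction)ᗮ :=
    Submodule.smul_mem _ _ hvmem
  have hconst : ∀ x ∈ K, (inner ℝ u x : ℝ) = ⟪u, x₀⟫ := by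
    intro x hx
    have hsub : x - x₀ ∈ (affineSpan ℝ K).direction := by
      have := AffineSubspace.vsub_mem_direction
        (subset_affineSpan ℝ K hx) (subset_affineSpan ℝ K hx₀)
      simpa using this
    have h0 : ⟪x - x₀, u⟫ = 0 := (Submodule.mem_orthogonal _ _).mp humem _ hsub
    rw [real_inner_comm] at h0
    rw [inner_sub_right] at h0
    linarith
  have himg : (fun x => (inner ℝ u x : ℝ)) '' K = {⟪u, x₀⟫} := by
    apply Set.eq_singleton_iff_nonempty_unique_mem.mpr
    constructor
    · exact ⟨_, Set.mem_image_of_mem _ hx₀⟩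
    · rintro p ⟨x, hx, rfl⟩
      exact hconst x hx
  have := width_eq_one hch u hu
  rw [himg] at this
  simp at this

end Width2

/-- if `μ` minimizes `E_{∞,λ}`, there is a convex body `W` of
constant width `1` containing `supp μ` whose capacity is maximal among sets of
diameter at most `1`, and `μ` attains the infimum defining `C_λ(W)`. -/
theorem stmt9 (n : ℕ) (hn : 1 ≤ n) (lam : ℝ) (hlam0 : 0 < lam) (hlamn : lam < n)
    (μ : Measure (Euc n)) (hμ : IsProbabilityMeasure μ)
    (hmin : ∀ ν : Measure (Euc n), IsProbabilityMeasure ν →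
      limitEnergy n lam μ ≤ limitEnergy n lam ν) :
    ∃ W : Set (Euc n), IsConstWidthBody n W ∧ msupport μ ⊆ W ∧
      capacity n lam W
        = (⨆ A : {A : Set (Euc n) // EMetric.diam A ≤ 1}, capacity n lam A.1) ∧
      rieszEnergy n lam μ
        = ⨅ ν : {ν : Measure (Euc n) // IsProbabilityMeasure ν ∧ msupport ν ⊆ W},
            rieszEnergy n lam ν.1 := by
  classical
  obtain ⟨ν₀, hν₀p, hν₀d, hν₀e⟩ := exists_nice_measure n hn lam hlam0 hlamn
  have hfin : limitEnergy n lam μ < ⊤ := by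
    refine lt_of_le_of_lt (hmin ν₀ hν₀p) ?_
    rw [limitEnergy, if_pos hν₀d]
    exact hν₀e
  have hdiamμ : EMetric.diam (msupport μ) ≤ 1 := by
    by_contra h
    rw [limitEnergy, if_neg h] at hfin
    exact lt_irrefl _ hfin
  have hEμ : limitEnergy n lam μ = rieszEnergy n lam μ := by
    rw [limitEnergy, if_pos hdiamμ]
  have hheart : ∀ ν : Measure (Euc n), IsProbabilityMeasure ν →
      EMetric.diam (msupport ν) ≤ 1 → rieszEnergy n lam μ ≤ rieszEnergy n lam ν := by
    intro ν hp hd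
    have := hmin ν hp
    rwa [hEμ, limitEnergy, if_pos hd] at this
  -- Zorn construction of the completion
  set P : Set (Set (Euc n)) := {S | msupport μ ⊆ S ∧ ∀ x ∈ S, ∀ y ∈ S, dist x y ≤ 1} with hP
  have hAP : msupport μ ∈ P := by
    refine ⟨subset_rfl, ?_⟩
    intro x hx y hy
    have := EMetric.edist_le_diam_of_mem hx hy
    have h2 : edist x y ≤ 1 := le_trans this hdiamμ
    rw [← ENNReal.ofReal_one] at h2
    exact (edist_le_ofReal (by norm_num)).mp h2
  have hzorn : ∃ K, msupport μ ⊆ K ∧ Maximal (· ∈ P) K := by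
    apply zorn_subset_nonempty
    · intro c hcP hchain hcne
      refine ⟨⋃₀ c, ⟨?_, ?_⟩, fun s hs => Set.subset_sUnion_of_mem hs⟩
      · obtain ⟨s, hs⟩ := hcne
        exact subset_trans (hcP hs).1 (Set.subset_sUnion_of_mem hs)
      · rintro x hx y hy
        obtain ⟨s₁, hs₁c, hxs₁⟩ := hx
        obtain ⟨s₂, hs₂c, hys₂⟩ := hy
        rcases hchain.total hs₁c hs₂c with h | h
        · exact (hcP hs₂c).2 x (h hxs₁) y hys₂
        · exact (hcP hs₁c).2 x hxs₁ y (h hys₂)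
    · exact hAP
  obtain ⟨K, hAK, hKmax⟩ := hzorn
  have hch : ∀ x, x ∈ K ↔ ∀ y ∈ K, dist x y ≤ 1 := by
    intro x
    constructor
    · intro hx y hy
      exact hKmax.1.2 x hx y hy
    · intro hx
      have hins : insert x K ∈ P := by
        refine ⟨subset_trans hAK (Set.subset_insert x K), ?_⟩
        rintro p hp q hq
        rcases Set.mem_insert_iff.mp hp with rfl | hpK
        · rcases Set.mem_insert_iff.mp hq with rfl | hqK
          · simp
          · exact hx q hqK
        · rcases Set.mem_insert_iff.mp hq with rfl | hqK
          · rw [dist_comm]; exact hx p hpK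
          · exact hKmax.1.2 p hpK q hqK
      have := hKmax.2 hins (Set.subset_insert x K)
      exact this (Set.mem_insert x K)
  have hKdiam : EMetric.diam K ≤ 1 := by
    apply EMetric.diam_le
    intro x hx y hy
    rw [edist_dist, ← ENNReal.ofReal_one]
    exact ENNReal.ofReal_le_ofReal (Kpair hch x hx y hy)
  refine ⟨K, ⟨Kcompact hch, Kconvex hch, interior_nonempty hch, width_eq_one hch⟩, hAK, ?_, ?_⟩
  · -- capacity equality
    have h4 : rieszEnergy n lam μ
        = ⨅ ν : {ν : Measure (Euc n) // IsProbabilityMeasure ν ∧ msupport ν ⊆ K},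
            rieszEnergy n lam ν.1 := by
      apply le_antisymm
      · apply le_iInf
        rintro ⟨ν, hp, hs⟩
        exact hheart ν hp (le_trans (EMetric.diam_mono hs) hKdiam)
      · exact iInf_le (fun ν : {ν : Measure (Euc n) // IsProbabilityMeasure ν ∧ msupport ν ⊆ K} => rieszEnergy n lam ν.1) ⟨μ, hμ, hAK⟩
    apply le_antisymm
    · exact le_iSup (fun A : {A : Set (Euc n) // EMetric.diam A ≤ 1} => capacity n lam A.1)
        ⟨K, hKdiam⟩
    · apply iSup_le
      rintro ⟨A, hA⟩
      rw [capacity, capacity]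
      apply ENNReal.inv_le_inv.mpr
      rw [← h4]
      apply le_iInf
      rintro ⟨ν, hp, hs⟩
      exact hheart ν hp (le_trans (EMetric.diam_mono hs) hA)
  · apply le_antisymm
    · apply le_iInf
      rintro ⟨ν, hp, hs⟩
      exact hheart ν hp (le_trans (EMetric.diam_mono hs) hKdiam)
    · exact iInf_le (fun ν : {ν : Measure (Euc n) // IsProbabilityMeasure ν ∧ msupport ν ⊆ K} => rieszEnergy n lam ν.1) ⟨μ, hμ, hAK⟩
end
end

section
/- Let n ≥ 1 and λ ∈ (0,n). Then sup{ C_λ(A) : A ⊂ ℝ^n, diam(A) = 1 } < 1; equivalently, the infimum of E_{∞,λ}(ν) over all Borel probability measures ν on ℝ^n is strictly greater than 1. -/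
open MeasureTheory Filter ENNReal Metric Topology

noncomputable section

/-- Antitonicity of `a ↦ a ^ (-lam)` on `ℝ≥0∞`. -/
lemma rpow_neg_anti {lam : ℝ} (hlam : 0 ≤ lam) {a b : ℝ≥0∞} (hab : a ≤ b) :
    b ^ (-lam) ≤ a ^ (-lam) := by
  rw [ENNReal.rpow_neg, ENNReal.rpow_neg]
  exact ENNReal.inv_le_inv.2 (ENNReal.rpow_le_rpow hab hlam)

/-- The complement of the support is open. -/
lemma isOpen_compl_msupport {n : ℕ} (μ : Measure (Euc n)) : IsOpen (msupport μ)ᶜ := by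
  rw [isOpen_iff_mem_nhds]
  intro x hx
  simp only [msupport, Set.mem_compl_iff, Set.mem_setOf_eq] at hx
  push_neg at hx
  obtain ⟨U, hUo, hxU, hU0⟩ := hx
  refine Filter.mem_of_superset (hUo.mem_nhds hxU) ?_
  intro z hz
  simp only [msupport, Set.mem_compl_iff, Set.mem_setOf_eq]
  push_neg
  exact ⟨U, hUo, hz, hU0⟩

/-- Key quantitative lower bound for the Riesz energy of probability measures
with support of diameter at most one. -/
lemma key_bound (n : ℕ) (lam : ℝ) (hlam0 : 0 < lam) :
    ∃ c : ℝ≥0∞, 1 < c ∧ ∀ μ : Measure (Euc n), IsProbabilityMeasure μ →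
      EMetric.diam (msupport μ) ≤ 1 → c ≤ rieszEnergy n lam μ := by
  -- a finite cover of the unit ball by balls of radius 1/4
  obtain ⟨T, hT⟩ := (isCompact_closedBall (0 : Euc n) 1).elim_finite_subcover
    (fun s : Euc n => ball s (4⁻¹ : ℝ)) (fun s => isOpen_ball)
    (fun x _ => Set.mem_iUnion.2 ⟨x, mem_ball_self (by norm_num)⟩)
  have hTne : T.Nonempty := by
    obtain ⟨s, hs, -⟩ := Set.mem_iUnion₂.1 (hT (mem_closedBall_self zero_le_one))
    exact ⟨s, hs⟩
  set N : ℝ≥0∞ := (T.card : ℝ≥0∞) with hN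
  have hN0 : N ≠ 0 := by
    simp only [hN, ne_eq, Nat.cast_eq_zero, Finset.card_eq_zero]
    exact hTne.ne_empty
  have hNtop : N ≠ ⊤ := by simp [hN]
  have hNinv0 : N⁻¹ ≠ 0 := ENNReal.inv_ne_zero.2 hNtop
  set c2 : ℝ≥0∞ := (2 : ℝ≥0∞) ^ lam with hc2
  have h1c2 : 1 < c2 := ENNReal.one_lt_rpow one_lt_two hlam0
  set ε : ℝ≥0∞ := (c2 - 1) * (N⁻¹ * N⁻¹) with hε
  have hε0 : ε ≠ 0 :=
    mul_ne_zero (tsub_pos_of_lt h1c2).ne' (mul_ne_zero hNinv0 hNinv0)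
  refine ⟨1 + ε, ENNReal.lt_add_right one_ne_top hε0, ?_⟩
  intro μ hμ hdiam
  set D := msupport μ with hD
  have hDmeas : MeasurableSet D := by
    simpa using (isOpen_compl_msupport μ).measurableSet.compl
  have hDfull : μ D = 1 := by
    have h := measure_add_measure_compl (μ := μ) hDmeas
    rw [msupport_compl_null μ, add_zero, measure_univ] at h
    exact h
  have hDne : D.Nonempty := by
    rcases Set.eq_empty_or_nonempty D with h | h
    · exfalso; rw [h, measure_empty] at hDfull; exact zero_ne_one hDfull
    · exact h
  obtain ⟨x₀, hx₀⟩ := hDne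
  -- translate the cover and find a ball of measure ≥ 1/N
  have hcover : D ⊆ ⋃ s ∈ T, ball (x₀ + s) (4⁻¹ : ℝ) := by
    intro y hy
    have hdist : dist y x₀ ≤ 1 := by
      have h : edist y x₀ ≤ 1 := le_trans (EMetric.edist_le_diam_of_mem hy hx₀) hdiam
      rwa [← ENNReal.ofReal_one, edist_le_ofReal zero_le_one] at h
    have hmem : y - x₀ ∈ closedBall (0 : Euc n) 1 := by
      simpa [dist_eq_norm, sub_zero] using hdist
    obtain ⟨s, hsT, hs⟩ := Set.mem_iUnion₂.1 (hT hmem)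
    refine Set.mem_iUnion₂.2 ⟨s, hsT, ?_⟩
    have hd : dist (y - x₀) s < 4⁻¹ := hs
    rw [mem_ball, dist_eq_norm]
    rw [dist_eq_norm] at hd
    have heq : y - (x₀ + s) = y - x₀ - s := by abel
    rwa [heq]
  have hsum : 1 ≤ ∑ s ∈ T, μ (ball (x₀ + s) (4⁻¹ : ℝ)) := by
    calc (1 : ℝ≥0∞) = μ D := hDfull.symm
    _ ≤ μ (⋃ s ∈ T, ball (x₀ + s) (4⁻¹ : ℝ)) := measure_mono hcover
    _ ≤ ∑ s ∈ T, μ (ball (x₀ + s) (4⁻¹ : ℝ)) := measure_biUnion_finset_le T _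
  obtain ⟨s₀, hs₀T, hs₀max⟩ := T.exists_max_image (fun s => μ (ball (x₀ + s) (4⁻¹ : ℝ))) hTne
  have hmax : N⁻¹ ≤ μ (ball (x₀ + s₀) (4⁻¹ : ℝ)) := by
    have h1 : (1 : ℝ≥0∞) ≤ N * μ (ball (x₀ + s₀) (4⁻¹ : ℝ)) := by
      calc (1 : ℝ≥0∞) ≤ ∑ s ∈ T, μ (ball (x₀ + s) (4⁻¹ : ℝ)) := hsum
      _ ≤ ∑ _s ∈ T, μ (ball (x₀ + s₀) (4⁻¹ : ℝ)) := Finset.sum_le_sum fun i hi => hs₀max i hi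
      _ = N * μ (ball (x₀ + s₀) (4⁻¹ : ℝ)) := by rw [Finset.sum_const, nsmul_eq_mul, hN]
    calc N⁻¹ = N⁻¹ * 1 := (mul_one _).symm
    _ ≤ N⁻¹ * (N * μ (ball (x₀ + s₀) (4⁻¹ : ℝ))) := by gcongr
    _ = (N⁻¹ * N) * μ (ball (x₀ + s₀) (4⁻¹ : ℝ)) := (mul_assoc _ _ _).symm
    _ = μ (ball (x₀ + s₀) (4⁻¹ : ℝ)) := by rw [ENNReal.inv_mul_cancel hN0 hNtop, one_mul]
  set B : Set (Euc n) := ball (x₀ + s₀) (4⁻¹ : ℝ) ∩ D with hB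
  have hBmeas : MeasurableSet B := isOpen_ball.measurableSet.inter hDmeas
  have hm : N⁻¹ ≤ μ B := by
    refine hmax.trans ?_
    have h2 : μ (ball (x₀ + s₀) (4⁻¹ : ℝ)) ≤ μ B + μ ((ball (x₀ + s₀) (4⁻¹ : ℝ)) ∩ Dᶜ) :=
      le_trans (measure_mono (by intro z hz; by_cases h : z ∈ D <;> simp [hB, hz, h]))
        (measure_union_le _ _)
    have h3 : μ ((ball (x₀ + s₀) (4⁻¹ : ℝ)) ∩ Dᶜ) = 0 :=
      measure_mono_null Set.inter_subset_right (msupport_compl_null μ)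
    rwa [h3, add_zero] at h2
  set m : ℝ≥0∞ := μ B with hmdef
  have hiD : Measurable (D.indicator (1 : Euc n → ℝ≥0∞)) := measurable_const.indicator hDmeas
  have hiB : Measurable (B.indicator (1 : Euc n → ℝ≥0∞)) := measurable_const.indicator hBmeas
  -- the lower-bound kernel
  set L : Euc n → Euc n → ℝ≥0∞ := fun x y =>
    D.indicator (1 : Euc n → ℝ≥0∞) x * D.indicator (1 : Euc n → ℝ≥0∞) y
      + ((c2 - 1) * B.indicator (1 : Euc n → ℝ≥0∞) x) * B.indicator (1 : Euc n → ℝ≥0∞) y with hL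
  have hbound : ∀ x y : Euc n, L x y ≤ edist x y ^ (-lam) := by
    intro x y
    by_cases hxD : x ∈ D
    · by_cases hyD : y ∈ D
      · have h1 : (1 : ℝ≥0∞) ≤ edist x y ^ (-lam) := by
          have he : edist x y ≤ 1 := le_trans (EMetric.edist_le_diam_of_mem hxD hyD) hdiam
          have h := rpow_neg_anti hlam0.le he
          rwa [ENNReal.one_rpow] at h
        by_cases hxB : x ∈ B
        · by_cases hyB : y ∈ B
          · have hd : dist x y < 2⁻¹ := by
              calc dist x y ≤ dist x (x₀ + s₀) + dist (x₀ + s₀) y := dist_triangle _ _ _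
              _ < 4⁻¹ + 4⁻¹ := by
                  have h1' : dist x (x₀ + s₀) < 4⁻¹ := hxB.1
                  have h2' : dist y (x₀ + s₀) < 4⁻¹ := hyB.1
                  rw [dist_comm (x₀ + s₀) y]; linarith
              _ = 2⁻¹ := by norm_num
            have he : edist x y ≤ (2⁻¹ : ℝ≥0∞) := by
              have h := (edist_le_ofReal (by norm_num : (0:ℝ) ≤ 2⁻¹)).2 hd.le
              have heq2 : ENNReal.ofReal (2⁻¹ : ℝ) = (2⁻¹ : ℝ≥0∞) := by
                rw [ENNReal.ofReal_inv_of_pos (by norm_num)]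
                norm_num
              rwa [heq2] at h
            have hc : c2 ≤ edist x y ^ (-lam) := by
              have h := rpow_neg_anti hlam0.le he
              rwa [ENNReal.inv_rpow, ENNReal.rpow_neg, inv_inv] at h
            calc L x y = 1 + (c2 - 1) := by simp [hL, hxD, hyD, hxB, hyB]
            _ = c2 := add_tsub_cancel_of_le h1c2.le
            _ ≤ edist x y ^ (-lam) := hc
          · calc L x y = 1 := by simp [hL, hxD, hyD, hyB]
            _ ≤ edist x y ^ (-lam) := h1
        · calc L x y = 1 := by simp [hL, hxD, hyD, hxB]
          _ ≤ edist x y ^ (-lam) := h1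
      · have hyB : y ∉ B := fun h => hyD h.2
        calc L x y = 0 := by simp [hL, hyD, hyB]
        _ ≤ _ := zero_le
    · have hxB : x ∉ B := fun h => hxD h.2
      calc L x y = 0 := by simp [hL, hxD, hxB]
      _ ≤ _ := zero_le
  -- compute the double integral of L
  have hinner : ∀ x : Euc n, ∫⁻ y, L x y ∂μ
      = D.indicator (1 : Euc n → ℝ≥0∞) x * 1
        + ((c2 - 1) * B.indicator (1 : Euc n → ℝ≥0∞) x) * m := by
    intro x
    simp only [hL]
    rw [lintegral_add_left (hiD.const_mul _), lintegral_const_mul _ hiD,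
      lintegral_const_mul _ hiB, lintegral_indicator_one hDmeas,
      lintegral_indicator_one hBmeas, hDfull]
  have hLint : ∫⁻ x, ∫⁻ y, L x y ∂μ ∂μ = 1 + (c2 - 1) * (m * m) := by
    rw [lintegral_congr hinner]
    rw [lintegral_add_left (hiD.mul_const _)]
    have h1 : ∫⁻ x, D.indicator (1 : Euc n → ℝ≥0∞) x * 1 ∂μ = 1 := by
      simp only [mul_one]
      rw [lintegral_indicator_one hDmeas, hDfull]
    have h2 : ∫⁻ x, ((c2 - 1) * B.indicator (1 : Euc n → ℝ≥0∞) x) * m ∂μ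
        = (c2 - 1) * (m * m) := by
      have hrw : ∀ x, ((c2 - 1) * B.indicator (1 : Euc n → ℝ≥0∞) x) * m
          = ((c2 - 1) * m) * B.indicator (1 : Euc n → ℝ≥0∞) x := fun x => by ring
      rw [lintegral_congr hrw, lintegral_const_mul _ hiB, lintegral_indicator_one hBmeas]
      ring
    rw [h1, h2]
  have hEL : 1 + (c2 - 1) * (m * m) ≤ rieszEnergy n lam μ := by
    rw [← hLint]
    exact lintegral_mono fun x => lintegral_mono fun y => hbound x y
  refine le_trans ?_ hEL
  have hem : ε ≤ (c2 - 1) * (m * m) := by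
    rw [hε]; gcongr
  exact add_le_add le_rfl hem

/-- the supremum of `C_λ(A)` over sets of diameter exactly `1`
is strictly less than `1`; equivalently the infimum of `E_{∞,λ}` over Borel
probability measures is strictly greater than `1`. -/
theorem stmt13 (n : ℕ) (hn : 1 ≤ n) (lam : ℝ) (hlam0 : 0 < lam) (hlamn : lam < n) :
    (⨆ A : {A : Set (Euc n) // EMetric.diam A = 1}, capacity n lam A.1) < 1 ∧
    1 < ⨅ ν : {ν : Measure (Euc n) // IsProbabilityMeasure ν}, limitEnergy n lam ν.1 := by
  obtain ⟨c, hc1, hc⟩ := key_bound n lam hlam0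
  constructor
  · refine lt_of_le_of_lt (iSup_le fun A => ?_) (ENNReal.inv_lt_one.2 hc1)
    rw [capacity]
    refine ENNReal.inv_le_inv.2 (le_iInf fun ν => ?_)
    obtain ⟨ν, hνp, hνs⟩ := ν
    refine hc ν hνp ?_
    calc EMetric.diam (msupport ν) ≤ EMetric.diam A.1 := EMetric.diam_mono hνs
    _ = 1 := A.2
  · refine lt_of_lt_of_le hc1 (le_iInf fun ν => ?_)
    obtain ⟨ν, hνp⟩ := ν
    rw [limitEnergy]
    split_ifs with h
    · exact hc ν hνp h
    · exact le_top
end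
end

section
/- Let λ > 0. For each integer n > λ, let S(n) := sup{ C_λ(A) : A ⊂ ℝ^n, diam(A) ≤ 1 }. Then lim_{n→∞} S(n) = 1. -/
/-
Since |x - y|^(-λ) ≥ 1 on a set of diameter at most 1, every probability measure on such a set
has energy at least 1, so S(n) ≤ 1. For the lower bound, place n balls of radius ε at the points
((1 - 2ε)/√2) eᵢ, the vertices of a regular simplex of side 1 - 2ε, and average the normalised
Lebesgue measures of the balls. Points of different balls are at distance at least 1 - 4ε, while a
ball interacts with itself with energy at most (1 + 2^(λ+1)) ε^(-λ) as soon as n ≥ λ + 1 (split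
the ball around x into dyadic shells), and this self-interaction carries weight 1/n. Hence
S(n) ≥ ((1 - 4ε)^(-λ) + O_ε(1/n))⁻¹, and letting n → ∞ and then ε → 0 gives S(n) → 1.
-/

open MeasureTheory Filter ENNReal Metric Topology

noncomputable section

open scoped ProbabilityTheory

lemma ENNReal.rpow_neg_le_rpow_neg {lam : ℝ} (hlam : 0 ≤ lam) {a b : ℝ≥0∞} (h : a ≤ b) :
    b ^ (-lam) ≤ a ^ (-lam) := by
  rw [ENNReal.rpow_neg, ENNReal.rpow_neg]
  exact ENNReal.inv_le_inv.2 (ENNReal.rpow_le_rpow h hlam)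

lemma edist_rpow_neg_le_ofReal {X : Type*} [PseudoMetricSpace X] {lam r : ℝ} (hlam : 0 ≤ lam)
    (hr : 0 < r) {x y : X} (h : r ≤ dist x y) :
    edist x y ^ (-lam) ≤ ENNReal.ofReal (r ^ (-lam)) := by
  rw [← ENNReal.ofReal_rpow_of_pos hr, edist_dist]
  exact ENNReal.rpow_neg_le_rpow_neg hlam (ENNReal.ofReal_le_ofReal h)

lemma msupport_eq_support {n : ℕ} (μ : Measure (Euc n)) : msupport μ = μ.support := by
  ext x
  simp [msupport, Measure.support_eq_forall_isOpen, imp.swap]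

lemma capacity_le_one {n : ℕ} {lam : ℝ} (hlam : 0 ≤ lam) {A : Set (Euc n)}
    (hA : ediam A ≤ 1) : capacity n lam A ≤ 1 := by
  rw [capacity, ENNReal.inv_le_one]
  refine le_iInf fun ⟨ν, _, hsupp⟩ => ?_
  have hνA : ∀ᵐ x ∂ν, x ∈ A :=
    Filter.mem_of_superset ν.support_mem_ae (msupport_eq_support ν ▸ hsupp)
  have hK : ∀ᵐ x ∂ν, ∀ᵐ y ∂ν, 1 ≤ edist x y ^ (-lam) := by
    filter_upwards [hνA] with x hx
    filter_upwards [hνA] with y hy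
    simpa using ENNReal.rpow_neg_le_rpow_neg hlam ((edist_le_ediam_of_mem hx hy).trans hA)
  calc (1 : ℝ≥0∞) = ∫⁻ _, ∫⁻ _, 1 ∂ν ∂ν := by simp
    _ ≤ rieszEnergy n lam ν := lintegral_mono_ae (hK.mono fun x hx => lintegral_mono_ae hx)

lemma inv_rieszEnergy_le_capacity {n : ℕ} {lam : ℝ} {A : Set (Euc n)} (ν : Measure (Euc n))
    [IsProbabilityMeasure ν] (hA : IsClosed A) (hνA : ∀ᵐ x ∂ν, x ∈ A) :
    (rieszEnergy n lam ν)⁻¹ ≤ capacity n lam A := by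
  have hsupp : msupport ν ⊆ A :=
    msupport_eq_support ν ▸ Measure.support_subset_of_isClosed hA hνA
  exact ENNReal.inv_le_inv.2 (iInf_le_of_le ⟨ν, inferInstance, hsupp⟩ le_rfl)

lemma edist_rpow_neg_le_tsum_indicator {X : Type*} [PseudoMetricSpace X] {lam r : ℝ}
    (hlam : 0 ≤ lam) {x y : X} (hxy : 0 < dist x y) (hyr : dist x y ≤ r) :
    edist x y ^ (-lam) ≤ ∑' k : ℕ, (closedBall x (r / 2 ^ k)).indicator
      (fun _ => ENNReal.ofReal ((r / (2 * 2 ^ k)) ^ (-lam))) y := by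
  obtain ⟨k, hk, hk'⟩ := exists_nat_pow_near ((one_le_div hxy).2 hyr) one_lt_two
  have hy : y ∈ closedBall x (r / 2 ^ k) := by
    rw [mem_closedBall, dist_comm, le_div_iff₀ (by positivity), mul_comm]
    exact (le_div_iff₀ hxy).1 hk
  have hlow : r / (2 * 2 ^ k) ≤ dist x y := by
    rw [div_le_iff₀ (by positivity), ← pow_succ', mul_comm]
    exact ((div_lt_iff₀ hxy).1 hk').le
  calc edist x y ^ (-lam) ≤ ENNReal.ofReal ((r / (2 * 2 ^ k)) ^ (-lam)) :=
        edist_rpow_neg_le_ofReal hlam (div_pos (hxy.trans_le hyr) (by positivity)) hlow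
    _ = (closedBall x (r / 2 ^ k)).indicator
          (fun _ => ENNReal.ofReal ((r / (2 * 2 ^ k)) ^ (-lam))) y := by
        rw [Set.indicator_of_mem hy]
    _ ≤ _ := ENNReal.le_tsum k

lemma rpow_neg_div_two_mul_inv_pow_le {lam r t : ℝ} {d : ℕ} (hr : 0 < r) (ht : 1 ≤ t)
    (hd : lam + 1 ≤ d) : (r / (2 * t)) ^ (-lam) * t⁻¹ ^ d ≤ 2 ^ lam * r ^ (-lam) * t⁻¹ := by
  have ht0 : 0 < t := by linarith
  have hsplit : (r / (2 * t)) ^ (-lam) = 2 ^ lam * r ^ (-lam) * t ^ lam := by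
    rw [Real.div_rpow hr.le (by positivity), Real.mul_rpow (by norm_num) ht0.le,
      Real.rpow_neg hr.le, Real.rpow_neg (by positivity), Real.rpow_neg ht0.le]
    field_simp
  have hpow : t ^ lam * t⁻¹ ^ d ≤ t⁻¹ := by
    rw [← Real.rpow_natCast, Real.inv_rpow ht0.le, ← Real.rpow_neg ht0.le,
      ← Real.rpow_add ht0, ← Real.rpow_neg_one]
    exact Real.rpow_le_rpow_of_exponent_le ht (by linarith)
  rw [hsplit, mul_assoc]
  gcongr

lemma lintegral_cond {X : Type*} [MeasurableSpace X] (μ : Measure X) (s : Set X)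
    (f : X → ℝ≥0∞) :
    ∫⁻ x, f x ∂μ[|s] = (μ s)⁻¹ * ∫⁻ x in s, f x ∂μ := by
  rw [ProbabilityTheory.cond, lintegral_smul_measure, smul_eq_mul]

lemma lintegral_cond_le_of_forall_mem {X : Type*} [MeasurableSpace X] {μ : Measure X}
    {s : Set X} (hs : MeasurableSet s) {f : X → ℝ≥0∞} {c : ℝ≥0∞} (h : ∀ x ∈ s, f x ≤ c) :
    ∫⁻ x, f x ∂μ[|s] ≤ c :=
  calc ∫⁻ x, f x ∂μ[|s] ≤ ∫⁻ _, c ∂μ[|s] :=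
        lintegral_mono_ae ((ProbabilityTheory.ae_cond_mem hs).mono h)
    _ = c * μ[|s] Set.univ := lintegral_const c
    _ ≤ c := mul_le_of_le_one_right' prob_le_one

lemma isProbabilityMeasure_cond_closedBall {X : Type*} [PseudoMetricSpace X] [ProperSpace X]
    [MeasurableSpace X] (μ : Measure X) [μ.IsOpenPosMeasure] [IsFiniteMeasureOnCompacts μ]
    (p : X) {r : ℝ} (hr : 0 < r) : IsProbabilityMeasure μ[|closedBall p r] :=
  ProbabilityTheory.cond_isProbabilityMeasure_of_finite (measure_closedBall_pos μ p hr).ne'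
    measure_closedBall_lt_top.ne

section AddHaar

variable {E : Type*} [NormedAddCommGroup E] [NormedSpace ℝ E] [FiniteDimensional ℝ E]
  [MeasurableSpace E] [BorelSpace E] (μ : Measure E) [μ.IsAddHaarMeasure]

lemma measure_closedBall_div_two_pow (x : E) {r : ℝ} (hr : 0 ≤ r) (k : ℕ) :
    μ (closedBall x (r / 2 ^ k)) =
      ENNReal.ofReal ((2 ^ k)⁻¹ ^ Module.finrank ℝ E) * μ (closedBall x r) := by
  rw [div_eq_inv_mul, Measure.addHaar_closedBall_mul μ x (by positivity) hr,
    Measure.addHaar_closedBall_center μ x r]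

lemma setLIntegral_closedBall_edist_rpow_neg_le {lam r : ℝ} (hlam : 0 ≤ lam)
    (hd : lam + 1 ≤ Module.finrank ℝ E) (x : E) (hr : 0 < r) :
    ∫⁻ y in closedBall x r, edist x y ^ (-lam) ∂μ ≤
      ENNReal.ofReal (2 ^ (lam + 1) * r ^ (-lam)) * μ (closedBall x r) := by
  have hd0 : 0 < Module.finrank ℝ E := (Nat.cast_pos (α := ℝ)).1 (by linarith)
  have : Nontrivial E := Module.nontrivial_of_finrank_pos hd0
  -- `c k` bounds the kernel on the shell `r / 2 ^ (k + 1) < dist x y ≤ r / 2 ^ k`, and the ball of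
  -- radius `r / 2 ^ k` has `2 ^ (-k d)` times the volume of `closedBall x r`: since `λ + 1 ≤ d`,
  -- the resulting series is dominated by a geometric one.
  set c : ℕ → ℝ≥0∞ := fun k => ENNReal.ofReal ((r / (2 * 2 ^ k)) ^ (-lam))
  have hpt : ∀ᵐ y ∂μ.restrict (closedBall x r), edist x y ^ (-lam) ≤
      ∑' k, (closedBall x (r / 2 ^ k)).indicator (fun _ => c k) y := by
    have hne : ∀ᵐ y ∂μ.restrict (closedBall x r), y ≠ x :=
      ae_restrict_of_ae (compl_mem_ae_iff.2 (measure_singleton x))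
    filter_upwards [ae_restrict_mem measurableSet_closedBall, hne] with y hyr hyx
    exact edist_rpow_neg_le_tsum_indicator hlam (dist_pos.2 (Ne.symm hyx))
      (by rw [dist_comm]; exact hyr)
  have hterm : ∀ k, c k * μ (closedBall x (r / 2 ^ k)) ≤
      ENNReal.ofReal (2 ^ lam * r ^ (-lam)) * μ (closedBall x r) * 2⁻¹ ^ k := by
    intro k
    rw [measure_closedBall_div_two_pow μ x hr.le, ← mul_assoc,
      ← ENNReal.ofReal_mul (by positivity)]
    have := rpow_neg_div_two_mul_inv_pow_le (d := Module.finrank ℝ E) hr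
      (one_le_pow₀ one_le_two (n := k)) hd
    calc _ ≤ ENNReal.ofReal (2 ^ lam * r ^ (-lam) * (2 ^ k)⁻¹) * μ (closedBall x r) := by gcongr
      _ = _ := by
        rw [ENNReal.ofReal_mul (by positivity), ENNReal.ofReal_inv_of_pos (by positivity),
          ENNReal.ofReal_pow zero_le_two, ENNReal.ofReal_ofNat, ENNReal.inv_pow]
        ring
  calc ∫⁻ y in closedBall x r, edist x y ^ (-lam) ∂μ
      ≤ ∫⁻ y in closedBall x r, ∑' k, (closedBall x (r / 2 ^ k)).indicator (fun _ => c k) y ∂μ :=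
        lintegral_mono_ae hpt
    _ ≤ ∫⁻ y, ∑' k, (closedBall x (r / 2 ^ k)).indicator (fun _ => c k) y ∂μ :=
        setLIntegral_le_lintegral _ _
    _ = ∑' k, c k * μ (closedBall x (r / 2 ^ k)) := by
        rw [lintegral_tsum fun k =>
          (measurable_const.indicator measurableSet_closedBall).aemeasurable]
        simp_rw [lintegral_indicator_const measurableSet_closedBall]
    _ ≤ ∑' k, ENNReal.ofReal (2 ^ lam * r ^ (-lam)) * μ (closedBall x r) * 2⁻¹ ^ k :=
        ENNReal.tsum_le_tsum hterm
    _ = ENNReal.ofReal (2 ^ (lam + 1) * r ^ (-lam)) * μ (closedBall x r) := by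
        rw [ENNReal.tsum_mul_left, ENNReal.tsum_geometric, ENNReal.one_sub_inv_two, inv_inv,
          Real.rpow_add_one two_ne_zero, mul_right_comm _ (2 : ℝ),
          ENNReal.ofReal_mul (p := 2 ^ lam * r ^ (-lam)) (by positivity),
          ENNReal.ofReal_ofNat]
        ring

lemma lintegral_edist_rpow_neg_cond_closedBall_le {lam r : ℝ} (hlam : 0 ≤ lam)
    (hd : lam + 1 ≤ Module.finrank ℝ E) (x p : E) (hr : 0 < r) :
    ∫⁻ y, edist x y ^ (-lam) ∂μ[|closedBall p r] ≤
      ENNReal.ofReal ((1 + 2 ^ (lam + 1)) * r ^ (-lam)) := by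
  -- Off the ball `B` around `x` the kernel is at most `r ^ (-λ)`, and `B` has the volume of the
  -- ball around `p`.
  set B := closedBall x r
  have hpt (y : E) :
      edist x y ^ (-lam) ≤ ENNReal.ofReal (r ^ (-lam)) + B.indicator (edist x · ^ (-lam)) y := by
    by_cases hy : y ∈ B
    · rw [Set.indicator_of_mem hy]; exact le_add_self
    · refine le_add_right (edist_rpow_neg_le_ofReal hlam hr ?_)
      rw [dist_comm]; exact (not_le.1 hy).le
  have hB : μ (closedBall p r) = μ B := by
    rw [Measure.addHaar_closedBall_center, Measure.addHaar_closedBall_center μ x]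
  have hB0 : μ B ≠ 0 := (measure_closedBall_pos μ x hr).ne'
  have hBtop : μ B ≠ ⊤ := measure_closedBall_lt_top.ne
  calc ∫⁻ y, edist x y ^ (-lam) ∂μ[|closedBall p r]
      ≤ ∫⁻ y, (ENNReal.ofReal (r ^ (-lam)) + B.indicator (edist x · ^ (-lam)) y)
          ∂μ[|closedBall p r] := lintegral_mono hpt
    _ = ENNReal.ofReal (r ^ (-lam)) +
          (μ B)⁻¹ * ∫⁻ y in closedBall p r, B.indicator (edist x · ^ (-lam)) y ∂μ := by
        have := isProbabilityMeasure_cond_closedBall μ p hr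
        rw [lintegral_add_left measurable_const, lintegral_const, measure_univ, mul_one,
          lintegral_cond, hB]
    _ ≤ ENNReal.ofReal (r ^ (-lam)) +
          (μ B)⁻¹ * (ENNReal.ofReal (2 ^ (lam + 1) * r ^ (-lam)) * μ B) := by
        gcongr
        calc _ ≤ ∫⁻ y, B.indicator (edist x · ^ (-lam)) y ∂μ := setLIntegral_le_lintegral _ _
          _ = _ := lintegral_indicator measurableSet_closedBall _
          _ ≤ _ := setLIntegral_closedBall_edist_rpow_neg_le μ hlam hd x hr
    _ = _ := by
        rw [mul_comm, mul_assoc, ENNReal.mul_inv_cancel hB0 hBtop, mul_one,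
          ← ENNReal.ofReal_add (by positivity) (by positivity)]
        ring_nf

end AddHaar

section UniformMixture

variable {X ι : Type*} [MeasurableSpace X] [Fintype ι]

def uniformMixture (μ : ι → Measure X) : Measure X :=
  (Fintype.card ι : ℝ≥0∞)⁻¹ • ∑ i, μ i

lemma lintegral_uniformMixture (μ : ι → Measure X) (f : X → ℝ≥0∞) :
    ∫⁻ x, f x ∂uniformMixture μ = (Fintype.card ι : ℝ≥0∞)⁻¹ * ∑ i, ∫⁻ x, f x ∂μ i := by
  rw [uniformMixture, lintegral_smul_measure, lintegral_finsetSum_measure, smul_eq_mul]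

lemma ae_uniformMixture_of_forall {μ : ι → Measure X} {P : X → Prop}
    (h : ∀ i, ∀ᵐ x ∂μ i, P x) : ∀ᵐ x ∂uniformMixture μ, P x :=
  Measure.ae_smul_measure (ae_finsetSum_measure_iff.2 fun i _ => h i) _

variable [Nonempty ι] (μ : ι → Measure X) [∀ i, IsProbabilityMeasure (μ i)]

instance isProbabilityMeasure_uniformMixture : IsProbabilityMeasure (uniformMixture μ) := by
  constructor
  rw [← setLIntegral_one, Measure.restrict_univ, lintegral_uniformMixture]
  simp only [lintegral_one, measure_univ, Finset.sum_const, Finset.card_univ, nsmul_eq_mul,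
    mul_one]
  exact ENNReal.inv_mul_cancel (by simp) (by simp)

lemma lintegral_lintegral_uniformMixture_le (K : X → X → ℝ≥0∞) {c d : ℝ≥0∞}
    (hcross : ∀ i j, i ≠ j → ∀ᵐ x ∂μ i, ∫⁻ y, K x y ∂μ j ≤ c)
    (hdiag : ∀ i, ∀ᵐ x ∂μ i, ∫⁻ y, K x y ∂μ i ≤ d) :
    ∫⁻ x, ∫⁻ y, K x y ∂uniformMixture μ ∂uniformMixture μ ≤ c + d / Fintype.card ι := by
  classical
  have hcard0 : (Fintype.card ι : ℝ≥0∞) ≠ 0 := by simp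
  have hcardtop : (Fintype.card ι : ℝ≥0∞) ≠ ⊤ := by simp
  have hinner : ∀ i, ∀ᵐ x ∂μ i, ∫⁻ y, K x y ∂uniformMixture μ ≤ c + d / Fintype.card ι := by
    intro i
    have hj : ∀ᵐ x ∂μ i, ∀ j, ∫⁻ y, K x y ∂μ j ≤ c + if j = i then d else 0 := by
      rw [ae_all_iff]
      intro j
      rcases eq_or_ne j i with rfl | hji
      · filter_upwards [hdiag j] with x hx
        simpa using hx.trans le_add_self
      · filter_upwards [hcross i j hji.symm] with x hx
        simpa [hji] using hx
    filter_upwards [hj] with x hx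
    calc ∫⁻ y, K x y ∂uniformMixture μ
        ≤ (Fintype.card ι : ℝ≥0∞)⁻¹ * ∑ j, (c + if j = i then d else 0) := by
          rw [lintegral_uniformMixture]
          gcongr with j
          exact hx j
      _ = c + d / Fintype.card ι := by
          rw [Finset.sum_add_distrib, Finset.sum_ite_eq', if_pos (Finset.mem_univ i),
            Finset.sum_const, Finset.card_univ, nsmul_eq_mul, mul_add, ← mul_assoc,
            ENNReal.inv_mul_cancel hcard0 hcardtop, one_mul, ENNReal.div_eq_inv_mul]
  calc ∫⁻ x, ∫⁻ y, K x y ∂uniformMixture μ ∂uniformMixture μ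
      ≤ (Fintype.card ι : ℝ≥0∞)⁻¹ * ∑ _i : ι, (c + d / Fintype.card ι) := by
        rw [lintegral_uniformMixture]
        gcongr with i
        calc _ ≤ ∫⁻ _, (c + d / Fintype.card ι) ∂μ i := lintegral_mono_ae (hinner i)
          _ = _ := by simp
    _ = c + d / Fintype.card ι := by
        rw [Finset.sum_const, Finset.card_univ, nsmul_eq_mul, ← mul_assoc,
          ENNReal.inv_mul_cancel hcard0 hcardtop, one_mul]

end UniformMixture

lemma EuclideanSpace.dist_single_single {ι : Type*} [Fintype ι] [DecidableEq ι] {i j : ι}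
    (hij : i ≠ j) (a : ℝ) :
    dist (EuclideanSpace.single i a) (EuclideanSpace.single j a) = √2 * |a| := by
  rw [dist_eq_norm, ← sq_eq_sq₀ (norm_nonneg _) (by positivity), norm_sub_sq_real,
    PiLp.norm_single, PiLp.norm_single, EuclideanSpace.inner_single_left, PiLp.single_apply,
    if_neg hij, mul_zero, mul_pow, Real.sq_sqrt zero_le_two, Real.norm_eq_abs]
  ring

lemma rieszEnergy_uniformMixture_cond_closedBall_le {n : ℕ} {lam δ ε : ℝ} (hlam : 0 ≤ lam)
    (hn : lam + 1 ≤ n) (hδ : 0 < δ) (hε : 0 < ε) (p : Fin n → Euc n)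
    (hp : ∀ i j, i ≠ j → δ + 2 * ε ≤ dist (p i) (p j)) :
    rieszEnergy n lam (uniformMixture fun i => volume[|closedBall (p i) ε]) ≤
      ENNReal.ofReal (δ ^ (-lam)) + ENNReal.ofReal ((1 + 2 ^ (lam + 1)) * ε ^ (-lam)) / n := by
  have : Nonempty (Fin n) := ⟨⟨0, (Nat.cast_pos (α := ℝ)).1 (by linarith)⟩⟩
  have (i : Fin n) := isProbabilityMeasure_cond_closedBall volume (p i) hε
  have hcross (i j : Fin n) (hij : i ≠ j) : ∀ᵐ x ∂volume[|closedBall (p i) ε],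
      ∫⁻ y, edist x y ^ (-lam) ∂volume[|closedBall (p j) ε] ≤ ENNReal.ofReal (δ ^ (-lam)) := by
    filter_upwards [ProbabilityTheory.ae_cond_mem measurableSet_closedBall] with x hx
    refine lintegral_cond_le_of_forall_mem measurableSet_closedBall fun y hy => ?_
    refine edist_rpow_neg_le_ofReal hlam hδ ?_
    linarith [dist_triangle4 (p i) x y (p j), mem_closedBall'.1 hx, mem_closedBall.1 hy,
      hp i j hij]
  have hdiag (i : Fin n) : ∀ᵐ x ∂volume[|closedBall (p i) ε],
      ∫⁻ y, edist x y ^ (-lam) ∂volume[|closedBall (p i) ε] ≤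
        ENNReal.ofReal ((1 + 2 ^ (lam + 1)) * ε ^ (-lam)) :=
    Eventually.of_forall fun x => lintegral_edist_rpow_neg_cond_closedBall_le volume hlam
      (by rwa [finrank_euclideanSpace_fin]) x (p i) hε
  exact (lintegral_lintegral_uniformMixture_le _ _ hcross hdiag).trans_eq
    (by rw [Fintype.card_fin])

lemma exists_ediam_le_one_inv_le_capacity {lam ε : ℝ} (hlam : 0 ≤ lam) (hε : 0 < ε)
    (hε4 : ε < 1 / 4) {n : ℕ} (hn : lam + 1 ≤ n) :
    ∃ A : Set (Euc n), ediam A ≤ 1 ∧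
      (ENNReal.ofReal ((1 - 4 * ε) ^ (-lam)) +
        ENNReal.ofReal ((1 + 2 ^ (lam + 1)) * ε ^ (-lam)) / n)⁻¹ ≤ capacity n lam A := by
  set p : Fin n → Euc n := fun i => EuclideanSpace.single i ((1 - 2 * ε) / √2)
  have hp_eq (i j : Fin n) (hij : i ≠ j) : dist (p i) (p j) = 1 - 2 * ε := by
    rw [EuclideanSpace.dist_single_single hij,
      abs_of_nonneg (div_nonneg (by linarith) (Real.sqrt_nonneg 2)),
      mul_div_cancel₀ _ (by positivity)]
  have hp_le (i j : Fin n) : dist (p i) (p j) ≤ 1 - 2 * ε := by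
    rcases eq_or_ne i j with rfl | hij
    · rw [dist_self]; linarith
    · exact (hp_eq i j hij).le
  set ν := uniformMixture fun i => volume[|closedBall (p i) ε]
  have : IsProbabilityMeasure ν := by
    have : Nonempty (Fin n) := ⟨⟨0, (Nat.cast_pos (α := ℝ)).1 (by linarith)⟩⟩
    have (i : Fin n) := isProbabilityMeasure_cond_closedBall volume (p i) hε
    infer_instance
  refine ⟨⋃ i, closedBall (p i) ε, ?_, ?_⟩
  · refine ediam_le fun x hx y hy => ?_
    obtain ⟨i, hxi⟩ := Set.mem_iUnion.1 hx
    obtain ⟨j, hyj⟩ := Set.mem_iUnion.1 hy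
    rw [edist_dist, ENNReal.ofReal_le_one]
    linarith [dist_triangle4 x (p i) (p j) y, mem_closedBall.1 hxi, mem_closedBall'.1 hyj,
      hp_le i j]
  · calc _ ≤ (rieszEnergy n lam ν)⁻¹ :=
          ENNReal.inv_le_inv.2 (rieszEnergy_uniformMixture_cond_closedBall_le hlam hn
            (by linarith) hε p fun i j hij => by rw [hp_eq i j hij]; linarith)
      _ ≤ capacity n lam (⋃ i, closedBall (p i) ε) :=
          inv_rieszEnergy_le_capacity ν (isClosed_iUnion_of_finite fun i => isClosed_closedBall)
            (ae_uniformMixture_of_forall fun i =>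
              (ProbabilityTheory.ae_cond_mem measurableSet_closedBall).mono
                fun x hx => Set.mem_iUnion.2 ⟨i, hx⟩)

lemma tendsto_inv_add_div_natCast {a b : ℝ≥0∞} (hb : b ≠ ⊤) :
    Tendsto (fun n : ℕ => (a + b / n)⁻¹) atTop (𝓝 a⁻¹) := by
  have : Tendsto (fun n : ℕ => b / n) atTop (𝓝 0) := by
    simpa [div_eq_mul_inv] using
      ENNReal.Tendsto.const_mul ENNReal.tendsto_inv_nat_nhds_zero (Or.inr hb)
  simpa using (tendsto_const_nhds.add this).inv

/-- with `S(n) = sup{C_λ(A) : A ⊆ ℝ^n, diam A ≤ 1}`, one has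
`S(n) → 1` as `n → ∞`. -/
theorem stmt15 (lam : ℝ) (hlam : 0 < lam) :
    Tendsto
      (fun n : ℕ => ⨆ A : {A : Set (Euc n) // EMetric.diam A ≤ 1}, capacity n lam A.1)
      atTop (𝓝 1) := by
  set S : ℕ → ℝ≥0∞ := fun n => ⨆ A : {A : Set (Euc n) // ediam A ≤ 1}, capacity n lam A.1
  have hS_le (n : ℕ) : S n ≤ 1 := iSup_le fun A => capacity_le_one hlam.le A.2
  have hS_ge : ∀ ε ∈ Set.Ioo (0 : ℝ) (1 / 4),
      (ENNReal.ofReal ((1 - 4 * ε) ^ (-lam)))⁻¹ ≤ liminf S atTop := by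
    rintro ε ⟨hε, hε4⟩
    rw [← (tendsto_inv_add_div_natCast ENNReal.ofReal_ne_top).liminf_eq]
    refine liminf_le_liminf ?_
    filter_upwards [tendsto_natCast_atTop_atTop.eventually_ge_atTop (lam + 1)] with n hn
    obtain ⟨A, hA, hcap⟩ := exists_ediam_le_one_inv_le_capacity hlam.le hε hε4 hn
    exact hcap.trans (le_iSup_of_le ⟨A, hA⟩ le_rfl)
  have hlim :
      Tendsto (fun ε : ℝ => (ENNReal.ofReal ((1 - 4 * ε) ^ (-lam)))⁻¹) (𝓝[>] 0) (𝓝 1) := by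
    have : ContinuousAt (fun ε : ℝ => (1 - 4 * ε) ^ (-lam)) 0 := by
      fun_prop (disch := norm_num)
    simpa using ((ENNReal.continuous_ofReal.tendsto _).comp this.tendsto).inv.mono_left
      nhdsWithin_le_nhds
  exact tendsto_of_le_liminf_of_limsup_le
    (le_of_tendsto hlim (eventually_of_mem (Ioo_mem_nhdsGT (by norm_num : (0 : ℝ) < 1 / 4)) hS_ge))
    (limsup_le_of_le (by isBoundedDefault) (Eventually.of_forall hS_le))
end
end
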